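/- arXiv:0707.4328 — 9 statements merged into one kernel-verified Lean document; each statement's English description precedes it below -/
import Mathlib

section
/- For all positive integers m and n and any complex number x with x ≠ -1, x^m ≠ 1, the identity ∑_{r_1,…,r_m ≤ n} ∏_{k=1}^{m} C(n-r_k, r_{k+1}) · (-x)^{r_k} / (1+x)^{2r_k} = (1 - x^{m(n+1)}) / ((1-x^m)(1+x)^{mn}) holds, where the sum is over all tuples (r_1,…,r_m) of nonnegative integers each at most n, and r_{m+1} := r_1. -/
/-!
The sum is `trace (A ^ m)` for the `(n + 1) × (n + 1)` matrix
`A r s = C(n - r, s) (-x)^r / (1 + x)^(2r)`. Let `V s = (X - x)^s ((1 + x)(1 - X))^(n - s)`.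
By the binomial theorem, `∑ s, A r s • V s = V r (x X) / (1 + x)^n`, so comparing coefficients of
`X^j` shows that the coefficient matrix `P` of the `V s` satisfies `A P = P D` with
`D = diag (x^j / (1 + x)^n)`. Homogenizing `V r` and evaluating at two suitable linear forms gives
`(1 - x²)^n X^r`, which exhibits an explicit inverse of `P` when `x ≠ ±1`. Hence
`trace (A ^ m) = ∑ j, x^(jm) / (1 + x)^(nm)`, a geometric sum.
-/

open Finset Polynomial

theorem Fin.sum_univ_pi_succ {ι R : Type*} [Fintype ι] [AddCommMonoid R] {m : ℕ}
    (f : (Fin (m + 1) → ι) → R) : ∑ r, f r = ∑ s, ∑ r : Fin m → ι, f (Fin.cons s r) := by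
  rw [← (Fin.consEquiv fun _ ↦ ι).sum_comp, Fintype.sum_prod_type]
  rfl

theorem sum_range_choose_mul_pow_mul_pow {R : Type*} [CommSemiring R] (u v : R) {N n : ℕ}
    (h : N ≤ n) :
    ∑ s ∈ range (n + 1), (N.choose s : R) * u ^ s * v ^ (n - s) = v ^ (n - N) * (u + v) ^ N := by
  rw [add_pow, mul_sum, ← sum_subset (range_subset_range.2 (by omega : N + 1 ≤ n + 1))]
  · refine sum_congr rfl fun s hs ↦ ?_
    rw [show n - s = (N - s) + (n - N) by grind, pow_add]
    ring
  · intro s _ hs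
    simp [Nat.choose_eq_zero_of_lt (by grind : N < s)]

namespace Matrix

variable {ι R : Type*} [Fintype ι] [DecidableEq ι] [CommSemiring R]

theorem pow_succ_apply_eq_sum_prod (B : Matrix ι ι R) (m : ℕ) (i j : ι) :
    (B ^ (m + 1)) i j = ∑ r : Fin m → ι,
      ∏ k, B ((Fin.cons i r : Fin (m + 1) → ι) k) ((Fin.snoc r j : Fin (m + 1) → ι) k) := by
  induction m generalizing i with
  | zero => simp [Fin.snoc]
  | succ m ih =>
    rw [pow_succ', mul_apply, Fin.sum_univ_pi_succ]
    refine sum_congr rfl fun s _ ↦ ?_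
    simp only [ih, mul_sum, ← Fin.cons_snoc_eq_snoc_cons, Fin.prod_univ_succ, Fin.cons_zero,
      Fin.cons_succ]

theorem trace_pow_eq_sum_prod {m : ℕ} [NeZero m] (B : Matrix ι ι R) :
    trace (B ^ m) = ∑ r : Fin m → ι, ∏ k, B (r k) (r (k + 1)) := by
  obtain ⟨m, rfl⟩ := Nat.exists_eq_succ_of_ne_zero (NeZero.ne m)
  have rotate (i : ι) (r : Fin m → ι) (k : Fin (m + 1)) :
      (Fin.snoc r i : Fin (m + 1) → ι) k = (Fin.cons i r : Fin (m + 1) → ι) (k + 1) := by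
    induction k using Fin.lastCases with
    | last => simp
    | cast k => simp [Fin.coeSucc_eq_succ]
  simp only [trace, diag_apply, pow_succ_apply_eq_sum_prod, rotate, Fin.sum_univ_pi_succ]

theorem trace_pow_eq_of_mul_eq_mul {A P D Q : Matrix ι ι R} (hAP : A * P = P * D)
    (hPQ : P * Q = 1) (m : ℕ) : trace (A ^ m) = trace (D ^ m) := by
  have hQP : Q * P = 1 := mul_eq_one_comm.mp hPQ
  have hpow : P * D ^ m = A ^ m * P := SemiconjBy.pow_right hAP.symm m
  calc trace (A ^ m) = trace (P * (D ^ m * Q)) := by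
        rw [← mul_assoc, hpow, mul_assoc, hPQ, mul_one]
    _ = trace (D ^ m) := by rw [trace_mul_comm, mul_assoc, hQP, mul_one]

end Matrix

namespace Polynomial

theorem aeval_homogenize_eq_sum {R A : Type*} [CommSemiring R] [CommSemiring A] [Algebra R A]
    (p : R[X]) (n : ℕ) (g : Fin 2 → A) :
    MvPolynomial.aeval g (p.homogenize n) =
      ∑ j ∈ range (n + 1), algebraMap R A (p.coeff j) * g 0 ^ j * g 1 ^ (n - j) := by
  simp [homogenize, Finset.Nat.sum_antidiagonal_eq_sum_range_succ_mk, MvPolynomial.aeval_monomial,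
    Finsupp.prod_fintype, mul_assoc]

theorem homogenize_pow {R : Type*} [CommSemiring R] {p : R[X]} {d : ℕ} (hp : p.natDegree ≤ d)
    (k : ℕ) : (p ^ k).homogenize (k * d) = p.homogenize d ^ k := by
  simpa using homogenize_finsetProd (s := range k) (p := fun _ ↦ p) (n := fun _ ↦ d) (by simp [hp])

end Polynomial

noncomputable section

def coeffMatrix {R : Type*} [Semiring R] (n : ℕ) (F : ℕ → R[X]) :
    Matrix (Fin (n + 1)) (Fin (n + 1)) R :=
  Matrix.of fun i j ↦ (F i).coeff j

theorem mul_coeffMatrix_apply {R : Type*} [CommSemiring R] {n : ℕ}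
    (M : Matrix (Fin (n + 1)) (Fin (n + 1)) R) (F : ℕ → R[X]) (i j : Fin (n + 1)) :
    (M * coeffMatrix n F) i j = (∑ k, C (M i k) * F k).coeff j := by
  simp [Matrix.mul_apply, coeffMatrix]

variable {K : Type*} [Field K]

def binomMatrix (n : ℕ) (x : K) : Matrix (Fin (n + 1)) (Fin (n + 1)) K :=
  Matrix.of fun r s ↦ ((n - r).choose s : K) * (-x) ^ (r : ℕ) / (1 + x) ^ (2 * (r : ℕ))

def eigenPoly (n : ℕ) (x : K) (s : ℕ) : K[X] := (X - C x) ^ s * (C (1 + x) * (1 - X)) ^ (n - s)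

/- With `u = (1 + x) X + x` and `v = (1 + x) X + 1` one has `u - x v = (1 - x²) X` and
`(1 + x) (v - u) = 1 - x²`, so the homogenization of `eigenPoly n x r` at `(u, v)` is
`(1 - x²)^n X^r`. -/
def dualPoly (n : ℕ) (x : K) (j : ℕ) : K[X] :=
  (C (1 + x) * X + C x) ^ j * (C (1 + x) * X + 1) ^ (n - j)

variable {n : ℕ} {x : K}

theorem sum_C_choose_mul_eigenPoly {r : ℕ} (hr : r ≤ n) :
    ∑ s ∈ range (n + 1), C ((n - r).choose s : K) * eigenPoly n x s =
      (C (1 + x) * (1 - X)) ^ r * (1 - C x * X) ^ (n - r) := by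
  have hsum : X - C x + C (1 + x) * (1 - X) = 1 - C x * X := by
    simp only [C_add, C_1]
    ring
  have := sum_range_choose_mul_pow_mul_pow (X - C x) (C (1 + x) * (1 - X)) (Nat.sub_le n r)
  rw [Nat.sub_sub_self hr, hsum] at this
  simpa only [eigenPoly, map_natCast, mul_assoc] using this

theorem eigenPoly_comp_C_mul_X (s : ℕ) :
    (eigenPoly n x s).comp (C x * X) =
      C ((-x) ^ s * (1 + x) ^ (n - s)) * ((1 - X) ^ s * (1 - C x * X) ^ (n - s)) := by
  have hlin : C x * X - C x = C (-x) * (1 - X) := by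
    simp only [map_neg]
    ring
  simp only [eigenPoly, mul_comp, pow_comp, sub_comp, X_comp, C_comp, one_comp, hlin, mul_pow,
    map_mul, map_pow]
  ring

theorem sum_C_binomMatrix_mul_eigenPoly (hx : 1 + x ≠ 0) (r : Fin (n + 1)) :
    ∑ s, C (binomMatrix n x r s) * eigenPoly n x s =
      C ((1 + x) ^ n)⁻¹ * (eigenPoly n x r).comp (C x * X) := by
  have hr : (r : ℕ) ≤ n := Nat.lt_succ_iff.mp r.2
  set w : K := (-x) ^ (r : ℕ) / (1 + x) ^ (2 * (r : ℕ))
  have hscalar :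
      w * (1 + x) ^ (r : ℕ) = ((1 + x) ^ n)⁻¹ * ((-x) ^ (r : ℕ) * (1 + x) ^ (n - r)) := by
    rw [← pow_mul_pow_sub (1 + x) hr]
    simp only [w]
    field_simp
    ring
  calc ∑ s, C (binomMatrix n x r s) * eigenPoly n x s
      = C w * ∑ s ∈ range (n + 1), C ((n - r).choose s : K) * eigenPoly n x s := by
        rw [mul_sum,
          ← Fin.sum_univ_eq_sum_range (fun s ↦ C w * (C ((n - r).choose s : K) * eigenPoly n x s))]
        refine sum_congr rfl fun s _ ↦ ?_
        simp only [binomMatrix, Matrix.of_apply, mul_div_assoc, map_mul, w]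
        ring
    _ = C (w * (1 + x) ^ (r : ℕ)) * ((1 - X) ^ (r : ℕ) * (1 - C x * X) ^ (n - r)) := by
        rw [sum_C_choose_mul_eigenPoly hr, mul_pow, map_mul, map_pow]
        ring
    _ = C ((1 + x) ^ n)⁻¹ * (eigenPoly n x r).comp (C x * X) := by
        rw [hscalar, eigenPoly_comp_C_mul_X, map_mul, mul_assoc]

theorem binomMatrix_mul_coeffMatrix_eigenPoly (hx : 1 + x ≠ 0) :
    binomMatrix n x * coeffMatrix n (eigenPoly n x) =
      coeffMatrix n (eigenPoly n x) *
        Matrix.diagonal fun j : Fin (n + 1) ↦ x ^ (j : ℕ) / (1 + x) ^ n := by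
  ext r j
  rw [mul_coeffMatrix_apply, sum_C_binomMatrix_mul_eigenPoly hx, coeff_C_mul, comp_C_mul_X_coeff]
  simp [coeffMatrix]
  ring

theorem aeval_homogenize_eigenPoly {r : ℕ} (hr : r ≤ n) :
    MvPolynomial.aeval ![C (1 + x) * X + C x, C (1 + x) * X + 1] ((eigenPoly n x r).homogenize n)
      = C (((1 + x) * (1 - x)) ^ n) * X ^ r := by
  have hmul := homogenize_mul ((X - C x) ^ r) ((C (1 + x) * (1 - X)) ^ (n - r))
    (m := r * 1) (n := (n - r) * 1) (by compute_degree!) (by compute_degree!)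
  rw [show r * 1 + (n - r) * 1 = n by omega] at hmul
  rw [eigenPoly, hmul, homogenize_pow (by compute_degree!), homogenize_pow (by compute_degree!),
    homogenize_sub, homogenize_C_mul, homogenize_sub, homogenize_X one_ne_zero, homogenize_C,
    homogenize_one]
  simp only [map_mul, map_pow, map_sub, MvPolynomial.aeval_X, MvPolynomial.aeval_C,
    Matrix.cons_val_zero, Matrix.cons_val_one, Matrix.cons_val_fin_one, algebraMap_eq, pow_one,
    tsub_self, pow_zero, mul_one]
  have hu : C (1 + x) * X + C x - C x * (C (1 + x) * X + 1) = C ((1 + x) * (1 - x)) * X := by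
    simp only [map_mul, map_sub, map_add, map_one]
    ring
  have hv : C (1 + x) * (C (1 + x) * X + 1 - (C (1 + x) * X + C x)) = C ((1 + x) * (1 - x)) := by
    simp only [map_mul, map_sub, map_add, map_one]
    ring
  rw [hu, hv, mul_pow, mul_right_comm, ← map_pow, ← map_pow, ← map_mul, pow_mul_pow_sub _ hr]
  simp only [map_pow, map_mul, map_sub, map_one]

theorem coeffMatrix_eigenPoly_mul_coeffMatrix_dualPoly :
    coeffMatrix n (eigenPoly n x) * coeffMatrix n (dualPoly n x) =
      ((1 + x) * (1 - x)) ^ n • 1 := by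
  ext r s
  have hrow : ∑ j, C (coeffMatrix n (eigenPoly n x) r j) * dualPoly n x j =
      C (((1 + x) * (1 - x)) ^ n) * X ^ (r : ℕ) := by
    rw [← aeval_homogenize_eigenPoly (Nat.lt_succ_iff.mp r.2), aeval_homogenize_eq_sum,
      ← Fin.sum_univ_eq_sum_range]
    simp [coeffMatrix, dualPoly, mul_assoc]
  rw [mul_coeffMatrix_apply, hrow, coeff_C_mul, coeff_X_pow, Matrix.smul_apply, Matrix.one_apply]
  simp [Fin.ext_iff, eq_comm]

theorem trace_binomMatrix_pow (hx : 1 + x ≠ 0) (hx' : x ≠ 1) (m : ℕ) :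
    (binomMatrix n x ^ m).trace = ∑ j : Fin (n + 1), (x ^ (j : ℕ) / (1 + x) ^ n) ^ m := by
  have hc : ((1 + x) * (1 - x)) ^ n ≠ 0 :=
    pow_ne_zero _ (mul_ne_zero hx (sub_ne_zero.mpr hx'.symm))
  have hinv : coeffMatrix n (eigenPoly n x) *
      (((1 + x) * (1 - x)) ^ n)⁻¹ • coeffMatrix n (dualPoly n x) = 1 := by
    rw [Matrix.mul_smul, coeffMatrix_eigenPoly_mul_coeffMatrix_dualPoly, smul_smul,
      inv_mul_cancel₀ hc, one_smul]
  rw [Matrix.trace_pow_eq_of_mul_eq_mul (binomMatrix_mul_coeffMatrix_eigenPoly hx) hinv,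
    Matrix.diagonal_pow, Matrix.trace_diagonal]
  rfl

end

theorem stmt0_general (m n : ℕ) (hm : 0 < m) (x : ℂ) (hx1 : x ≠ -1) (hx2 : x ^ m ≠ 1) :
    ∑ r : Fin m → Fin (n + 1), ∏ k : Fin m,
      (((n - (r k : ℕ)).choose (r ⟨((k : ℕ) + 1) % m, Nat.mod_lt _ hm⟩ : ℕ) : ℂ) *
        (-x) ^ (r k : ℕ) / (1 + x) ^ (2 * (r k : ℕ)))
    = (1 - x ^ (m * (n + 1))) / ((1 - x ^ m) * (1 + x) ^ (m * n)) := by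
  have : NeZero m := ⟨hm.ne'⟩
  have hx : 1 + x ≠ 0 := fun h ↦ hx1 (by linear_combination h)
  have hx' : x ≠ 1 := by rintro rfl; simp at hx2
  have hsucc (k : Fin m) : (⟨((k : ℕ) + 1) % m, Nat.mod_lt _ hm⟩ : Fin m) = k + 1 := by
    ext
    simp [Fin.val_add]
  calc _ = ∑ r : Fin m → Fin (n + 1), ∏ k, binomMatrix n x (r k) (r (k + 1)) := by
        simp only [hsucc]
        rfl
    _ = ∑ j : Fin (n + 1), (x ^ m) ^ (j : ℕ) / (1 + x) ^ (m * n) := by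
        rw [← Matrix.trace_pow_eq_sum_prod, trace_binomMatrix_pow hx hx']
        refine sum_congr rfl fun j _ ↦ ?_
        ring
    _ = _ := by
        rw [← sum_div, Fin.sum_univ_eq_sum_range (fun j ↦ (x ^ m) ^ j), geom_sum_eq hx2, ← pow_mul,
          div_div, ← neg_div_neg_eq, neg_sub, neg_mul_eq_neg_mul, neg_sub]

theorem stmt0 (m n : ℕ) (hm : 0 < m) (hn : 0 < n) (x : ℂ) (hx1 : x ≠ -1) (hx2 : x ^ m ≠ 1) :
    ∑ r : Fin m → Fin (n + 1), ∏ k : Fin m,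
      (((n - (r k : ℕ)).choose (r ⟨((k : ℕ) + 1) % m, Nat.mod_lt _ hm⟩ : ℕ) : ℂ) *
        (-x) ^ (r k : ℕ) / (1 + x) ^ (2 * (r k : ℕ)))
    = (1 - x ^ (m * (n + 1))) / ((1 - x ^ m) * (1 + x) ^ (m * n)) :=
  stmt0_general m n hm x hx1 hx2
end

section
/- For all nonnegative integers n, ∑_{k=0}^{⌊n/2⌋} (-1)^k q^{C(k,2)} · qbinom(n-k, k) equals (-1)^{⌊n/3⌋} q^{n(n-1)/6} if n ≢ 2 (mod 3), and equals 0 if n ≡ 2 (mod 3), as an identity of Laurent polynomials (or rational functions) in q. -/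
/-!
Write `S n` for the sum and `T n` for the same sum with `q ^ C(k+1, 2)` in place of
`q ^ C(k, 2)`. The two q-Pascal rules `[a+1, b+1] = q^(b+1) [a, b+1] + [a, b]` and
`q^b [a+1, b+1] = q^b [a, b+1] + q^a [a, b]` give `S (n+2) = T (n+1) - T n` and
`T (n+2) = T (n+1) - q^(n+1) S n`, hence `S (n+3) = -q^(n+1) S n`. Together with
`S 0 = S 1 = 1` and `S 2 = 0` this recursion yields the closed form.
-/

open Finset

/-- The Gaussian (q-)binomial coefficient as a rational function in `q = RatFunc.X`. -/
noncomputable def qbin (a b : ℕ) : RatFunc ℚ :=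
  if b ≤ a then ∏ i ∈ Finset.range b,
    (1 - RatFunc.X ^ (a - i)) / (1 - RatFunc.X ^ (i + 1)) else 0

theorem RatFunc.one_sub_X_pow_ne_zero {K : Type*} [Field K] {m : ℕ} (hm : m ≠ 0) :
    (1 - X ^ m : RatFunc K) ≠ 0 := by
  have h := algebraMap_ne_zero (K := K) (Polynomial.X_pow_sub_C_ne_zero (Nat.pos_of_ne_zero hm) 1)
  simp only [map_sub, map_pow, algebraMap_X, map_one] at h
  exact sub_ne_zero.mpr (sub_ne_zero.mp h).symm

namespace QBinomial

local notation "q" => (RatFunc.X : RatFunc ℚ)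

theorem one_sub_q_pow_succ_ne_zero (m : ℕ) : 1 - q ^ (m + 1) ≠ 0 :=
  RatFunc.one_sub_X_pow_ne_zero m.succ_ne_zero

theorem qbin_zero_right (a : ℕ) : qbin a 0 = 1 := by simp [qbin]

theorem qbin_of_lt {a b : ℕ} (h : a < b) : qbin a b = 0 := by
  rw [qbin, if_neg (by omega)]

theorem qbin_of_le {a b : ℕ} (h : b ≤ a) :
    qbin a b = (∏ i ∈ range b, (1 - q ^ (a - i))) / ∏ i ∈ range b, (1 - q ^ (i + 1)) := by
  rw [qbin, if_pos h, prod_div_distrib]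

theorem prod_one_sub_q_pow_succ_ne_zero (b : ℕ) : ∏ i ∈ range b, (1 - q ^ (i + 1)) ≠ 0 :=
  prod_ne_zero_iff.mpr fun i _ => one_sub_q_pow_succ_ne_zero i

theorem qbin_succ_succ_mul (a b : ℕ) :
    qbin (a + 1) (b + 1) * (1 - q ^ (b + 1)) = (1 - q ^ (a + 1)) * qbin a b := by
  rcases lt_or_ge a b with h | h
  · rw [qbin_of_lt h, qbin_of_lt (by omega), zero_mul, mul_zero]
  rw [qbin_of_le (by omega), qbin_of_le h, prod_range_succ', prod_range_succ]
  simp only [Nat.add_sub_add_right, Nat.sub_zero]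
  field_simp [prod_one_sub_q_pow_succ_ne_zero b, one_sub_q_pow_succ_ne_zero b]

theorem qbin_succ_right_mul (a b : ℕ) :
    qbin a (b + 1) * (1 - q ^ (b + 1)) = qbin a b * (1 - q ^ (a - b)) := by
  rcases lt_or_ge b a with h | h
  · rw [qbin_of_le h, qbin_of_le h.le, prod_range_succ, prod_range_succ]
    field_simp [prod_one_sub_q_pow_succ_ne_zero b, one_sub_q_pow_succ_ne_zero b]
  · rw [qbin_of_lt (by omega), zero_mul, Nat.sub_eq_zero_of_le h, pow_zero, sub_self, mul_zero]

theorem qbin_succ_succ (a b : ℕ) :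
    qbin (a + 1) (b + 1) = q ^ (b + 1) * qbin a (b + 1) + qbin a b := by
  rcases lt_or_ge a b with h | h
  · rw [qbin_of_lt h, qbin_of_lt (by omega), qbin_of_lt (by omega), mul_zero, add_zero]
  refine mul_right_cancel₀ (one_sub_q_pow_succ_ne_zero b) ?_
  have hpow : q ^ (a + 1) = q ^ (b + 1) * q ^ (a - b) := by rw [← pow_add]; congr 1; omega
  linear_combination qbin_succ_succ_mul a b - q ^ (b + 1) * qbin_succ_right_mul a b
    - qbin a b * hpow

theorem pow_mul_qbin_succ_succ (a b : ℕ) :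
    q ^ b * qbin (a + 1) (b + 1) = q ^ b * qbin a (b + 1) + q ^ a * qbin a b := by
  rcases lt_or_ge a b with h | h
  · rw [qbin_of_lt h, qbin_of_lt (by omega), qbin_of_lt (by omega)]; ring
  refine mul_right_cancel₀ (one_sub_q_pow_succ_ne_zero b) ?_
  have hpow : q ^ a = q ^ b * q ^ (a - b) := by rw [← pow_add]; congr 1; omega
  linear_combination q ^ b * qbin_succ_succ_mul a b - q ^ b * qbin_succ_right_mul a b
    - qbin a b * hpow

theorem choose_two_succ (j : ℕ) : (j + 1).choose 2 = j.choose 2 + j := by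
  rw [Nat.choose_succ_succ', Nat.choose_one_right, add_comm]

theorem sum_antidiagonal_succ_mul_qbin (f : ℕ → RatFunc ℚ) (n : ℕ) :
    ∑ p ∈ antidiagonal (n + 1), f p.1 * qbin p.2 p.1
      = f 0 + ∑ p ∈ antidiagonal n, f (p.1 + 1) * qbin p.2 (p.1 + 1) := by
  rw [Nat.sum_antidiagonal_succ, qbin_zero_right, mul_one]

theorem sum_antidiagonal_add_two_mul_qbin (f : ℕ → RatFunc ℚ) (n : ℕ) :
    ∑ p ∈ antidiagonal (n + 2), f p.1 * qbin p.2 p.1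
      = f 0 + ∑ p ∈ antidiagonal n, f (p.1 + 1) * qbin (p.2 + 1) (p.1 + 1) := by
  rw [sum_antidiagonal_succ_mul_qbin, Nat.sum_antidiagonal_succ', qbin_of_lt (n + 1).succ_pos,
    mul_zero, zero_add]

/-- `S n`, summed over pairs `(k, n - k)` of the antidiagonal to avoid truncated subtraction. -/
noncomputable def altSum (n : ℕ) : RatFunc ℚ :=
  ∑ p ∈ antidiagonal n, (-1) ^ p.1 * q ^ p.1.choose 2 * qbin p.2 p.1

/-- `T n`. -/
noncomputable def altSumShifted (n : ℕ) : RatFunc ℚ :=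
  ∑ p ∈ antidiagonal n, (-1) ^ p.1 * q ^ (p.1 + 1).choose 2 * qbin p.2 p.1

theorem altSum_add_two (n : ℕ) : altSum (n + 2) = altSumShifted (n + 1) - altSumShifted n := by
  rw [altSum, sum_antidiagonal_add_two_mul_qbin (fun k => (-1) ^ k * q ^ k.choose 2),
    altSumShifted, sum_antidiagonal_succ_mul_qbin (fun k => (-1) ^ k * q ^ (k + 1).choose 2),
    altSumShifted, add_sub_assoc, ← sum_sub_distrib]
  congr 1
  refine sum_congr rfl fun p _ => ?_
  rw [qbin_succ_succ, choose_two_succ (p.1 + 1)]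
  ring

theorem altSumShifted_add_two (n : ℕ) :
    altSumShifted (n + 2) = altSumShifted (n + 1) - q ^ (n + 1) * altSum n := by
  rw [altSumShifted, sum_antidiagonal_add_two_mul_qbin (fun k => (-1) ^ k * q ^ (k + 1).choose 2),
    altSumShifted, sum_antidiagonal_succ_mul_qbin (fun k => (-1) ^ k * q ^ (k + 1).choose 2),
    altSum, mul_sum, add_sub_assoc, ← sum_sub_distrib]
  congr 1
  refine sum_congr rfl fun p hp => ?_
  rw [← mem_antidiagonal.mp hp, choose_two_succ (p.1 + 1), choose_two_succ]
  linear_combination (-1) ^ (p.1 + 1) * q ^ (p.1.choose 2 + p.1 + 1) * pow_mul_qbin_succ_succ p.2 p.1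

theorem altSum_add_three (n : ℕ) : altSum (n + 3) = -q ^ (n + 1) * altSum n := by
  rw [altSum_add_two, altSumShifted_add_two]
  ring

theorem altSum_zero : altSum 0 = 1 := by simp [altSum, qbin_zero_right]

theorem altSum_one : altSum 1 = 1 := by
  simp [altSum, Nat.sum_antidiagonal_succ, qbin_zero_right, qbin_of_lt]

theorem altSum_two : altSum 2 = 0 := by
  simp [altSum_add_two, altSumShifted, Nat.sum_antidiagonal_succ, qbin_zero_right, qbin_of_lt]

theorem add_three_mul_sub_one_div_six (m : ℕ) :
    (m + 3) * (m + 3 - 1) / 6 = m * (m - 1) / 6 + (m + 1) := by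
  have h : (m + 3) * (m + 3 - 1) = m * (m - 1) + (m + 1) * 6 := by
    rcases m with _ | m
    · rfl
    · rw [show m + 1 + 3 - 1 = m + 3 by omega, Nat.add_sub_cancel]; ring
  rw [h, Nat.add_mul_div_right _ _ (by norm_num)]

theorem altSum_eq (n : ℕ) :
    altSum n = if n % 3 = 2 then 0 else (-1) ^ (n / 3) * q ^ (n * (n - 1) / 6) := by
  induction n using Nat.strong_induction_on with
  | _ n ih =>
    match n with
    | 0 => simp [altSum_zero]
    | 1 => simp [altSum_one]
    | 2 => simp [altSum_two]
    | m + 3 =>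
      rw [altSum_add_three, ih m (by omega), Nat.add_mod_right, Nat.add_div_right _ three_pos,
        add_three_mul_sub_one_div_six]
      split_ifs
      · rw [mul_zero]
      · ring

theorem sum_range_eq_altSum (n : ℕ) :
    ∑ k ∈ range (n / 2 + 1), (-1 : RatFunc ℚ) ^ k * q ^ k.choose 2 * qbin (n - k) k
      = altSum n := by
  rw [altSum, Nat.sum_antidiagonal_eq_sum_range_succ_mk]
  refine sum_subset (range_subset_range.mpr (by omega)) fun k hk hk' => ?_
  rw [mem_range] at hk hk'
  rw [qbin_of_lt (by omega), mul_zero]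

end QBinomial

open QBinomial in
theorem stmt1 (n : ℕ) :
    ∑ k ∈ Finset.range (n / 2 + 1),
      (-1 : RatFunc ℚ) ^ k * RatFunc.X ^ k.choose 2 * qbin (n - k) k
    = if n % 3 = 2 then 0
      else (-1 : RatFunc ℚ) ^ (n / 3) * RatFunc.X ^ (n * (n - 1) / 6) := by
  rw [sum_range_eq_altSum, altSum_eq]
end

section
/- For all nonnegative integers L, ∑_{j=-L}^{L} (-1)^j q^{j(3j+1)/2} · qbinom(2L-j, L+j) = 1 as an identity of rational functions (or polynomials) in q. -/
open Finset

/-- The Gaussian (q-)binomial coefficient with integer indices, as a rational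
function in `q = RatFunc.X`; it is `0` when the lower index is negative or
exceeds the upper index. -/
noncomputable def qbinZ (a b : ℤ) : RatFunc ℚ :=
  if 0 ≤ b ∧ b ≤ a then ∏ i ∈ Finset.range b.toNat,
    (1 - RatFunc.X ^ (a - (i : ℤ))) / (1 - RatFunc.X ^ ((i : ℤ) + 1)) else 0

/-!
Induction on `L`. Write `T_n(j)` for the summand, `[a, b]` for the Gaussian binomial and
`p(j) = j(3j+1)/2`. The two q-Pascal recurrences combine to
`[a+2, b] - [a, b-1] = q^b [a, b] + q^(a+2-b) [a+1, b-1]`, which at `a = 2n-2-j`, `b = n+j` reads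
`T_n(j) - T_{n-1}(j) = H_n(j) - H_n(j-1)` with `H_n(j) = (-1)^j q^(p(j)+n+j) [2n-2-j, n+j]`.
Summed over `j`, the right side telescopes to boundary terms that vanish, and the summands
`T_{n-1}(±n)` vanish too, so the sum for `n` equals the sum for `n - 1`.
-/

theorem Int.sum_Icc_sub_sub_one {M : Type*} [AddCommGroup M] (f : ℤ → M) {a b : ℤ}
    (hab : a - 1 ≤ b) : ∑ j ∈ Icc a b, (f j - f (j - 1)) = f b - f (a - 1) := by
  induction b, hab using Int.leInduction with
  | base => simp
  | succ b hab ih =>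
    rw [← insert_Icc_right_eq_Icc_add_one (by omega), sum_insert (by simp), ih,
      add_sub_cancel_right]
    abel

theorem RatFunc.one_sub_X_zpow_ne_zero {K : Type*} [Field K] {k : ℤ} (hk : 0 < k) :
    (1 : RatFunc K) - X ^ k ≠ 0 := by
  lift k to ℕ using hk.le
  rw [zpow_natCast, sub_ne_zero, ne_comm, ← algebraMap_X, ← map_pow,
    ← map_one (algebraMap (Polynomial K) (RatFunc K)), Ne, (algebraMap_injective K).eq_iff]
  intro h
  have := congrArg Polynomial.natDegree h
  simp only [Polynomial.natDegree_X_pow, Polynomial.natDegree_one] at this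
  omega

local notation "q" => (RatFunc.X : RatFunc ℚ)

noncomputable def qFactorial (n : ℕ) : RatFunc ℚ := ∏ i ∈ range n, (1 - q ^ ((i : ℤ) + 1))

lemma qFactorial_zero : qFactorial 0 = 1 := prod_range_zero _

lemma qFactorial_succ (n : ℕ) : qFactorial (n + 1) = qFactorial n * (1 - q ^ ((n : ℤ) + 1)) :=
  prod_range_succ _ _

lemma qFactorial_ne_zero (n : ℕ) : qFactorial n ≠ 0 :=
  prod_ne_zero_iff.2 fun i _ ↦ RatFunc.one_sub_X_zpow_ne_zero (by omega)

lemma qbinZ_add_eq_qFactorial_div (m k : ℕ) :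
    qbinZ (m + k) k = qFactorial (m + k) / (qFactorial m * qFactorial k) := by
  rw [qbinZ, if_pos (by omega), Int.toNat_natCast]
  induction k generalizing m with
  | zero => simp [qFactorial_zero, div_self (qFactorial_ne_zero m)]
  | succ k ih =>
    have hk := ih (m + 1)
    push_cast at hk ⊢
    rw [prod_range_succ, show (m : ℤ) + (k + 1) = m + 1 + k by ring, hk,
      show (m : ℤ) + 1 + k - k = m + 1 by ring, show m + (k + 1) = m + 1 + k by ring,
      qFactorial_succ m, qFactorial_succ k]
    have := qFactorial_ne_zero m
    have := qFactorial_ne_zero k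
    have := RatFunc.one_sub_X_zpow_ne_zero (K := ℚ) (k := (m : ℤ) + 1) (by omega)
    have := RatFunc.one_sub_X_zpow_ne_zero (K := ℚ) (k := (k : ℤ) + 1) (by omega)
    field_simp

lemma qbinZ_eq_zero_of_neg {a b : ℤ} (hb : b < 0) : qbinZ a b = 0 := if_neg (by omega)

lemma qbinZ_eq_zero_of_lt {a b : ℤ} (hab : a < b) : qbinZ a b = 0 := if_neg (by omega)

lemma qbinZ_zero_right {a : ℤ} (ha : 0 ≤ a) : qbinZ a 0 = 1 := by
  lift a to ℕ using ha
  simpa [qFactorial_zero, div_self (qFactorial_ne_zero a)] using qbinZ_add_eq_qFactorial_div a 0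

lemma qbinZ_symm (a b : ℤ) : qbinZ a (a - b) = qbinZ a b := by
  by_cases hb : 0 ≤ b ∧ b ≤ a
  · obtain ⟨k, rfl⟩ : ∃ k : ℕ, b = k := ⟨b.toNat, by omega⟩
    obtain ⟨m, rfl⟩ : ∃ m : ℕ, a = m + k := ⟨(a - k).toNat, by omega⟩
    have h := qbinZ_add_eq_qFactorial_div k m
    rw [add_comm (k : ℤ), add_comm k, mul_comm] at h
    rw [add_sub_cancel_right, h, qbinZ_add_eq_qFactorial_div]
  · rcases not_and_or.1 hb with hb | hb
    · rw [qbinZ_eq_zero_of_lt (by omega), qbinZ_eq_zero_of_neg (by omega)]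
    · rw [qbinZ_eq_zero_of_neg (by omega), qbinZ_eq_zero_of_lt (by omega)]

lemma qbinZ_self {a : ℤ} (ha : 0 ≤ a) : qbinZ a a = 1 := by
  simpa [qbinZ_zero_right ha] using qbinZ_symm a 0

lemma qbinZ_pascal {a : ℤ} (ha : 0 < a) (b : ℤ) :
    qbinZ a b = qbinZ (a - 1) (b - 1) + q ^ b * qbinZ (a - 1) b := by
  obtain hb | rfl | ⟨hb, hba⟩ | rfl | hab :
      b < 0 ∨ b = 0 ∨ (0 < b ∧ b < a) ∨ b = a ∨ a < b := by omega
  · simp [qbinZ_eq_zero_of_neg, hb, show b - 1 < 0 by omega]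
  · rw [qbinZ_zero_right ha.le, qbinZ_zero_right (by omega), qbinZ_eq_zero_of_neg (by omega)]
    simp
  · obtain ⟨k, rfl⟩ : ∃ k : ℕ, b = k + 1 := ⟨(b - 1).toNat, by omega⟩
    obtain ⟨m, rfl⟩ : ∃ m : ℕ, a = m + 1 + (k + 1) := ⟨(a - k - 2).toNat, by omega⟩
    have e₁ := qbinZ_add_eq_qFactorial_div (m + 1) (k + 1)
    have e₂ := qbinZ_add_eq_qFactorial_div (m + 1) k
    have e₃ := qbinZ_add_eq_qFactorial_div m (k + 1)
    push_cast at e₁ e₂ e₃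
    rw [show (m : ℤ) + 1 + (k + 1) - 1 = m + 1 + k by ring, add_sub_cancel_right, e₁, e₂,
      show (m : ℤ) + 1 + k = m + (k + 1) by ring, e₃,
      show m + 1 + (k + 1) = m + (k + 1) + 1 by ring, show m + 1 + k = m + (k + 1) by ring,
      qFactorial_succ (m + (k + 1)), qFactorial_succ m, qFactorial_succ k]
    have hq : q ^ (((m + (k + 1) : ℕ) : ℤ) + 1) =
        q ^ ((k : ℤ) + 1) * q ^ ((m : ℤ) + 1) := by
      rw [← zpow_add₀ RatFunc.X_ne_zero]; push_cast; ring_nf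
    have := qFactorial_ne_zero m
    have := qFactorial_ne_zero k
    have := RatFunc.one_sub_X_zpow_ne_zero (K := ℚ) (k := (m : ℤ) + 1) (by omega)
    have := RatFunc.one_sub_X_zpow_ne_zero (K := ℚ) (k := (k : ℤ) + 1) (by omega)
    field_simp
    linear_combination (-(qFactorial (m + (k + 1)))) * hq
  · rw [qbinZ_self ha.le, qbinZ_self (by omega), qbinZ_eq_zero_of_lt (by omega)]
    simp
  · simp [qbinZ_eq_zero_of_lt, hab, show a - 1 < b by omega, show a - 1 < b - 1 by omega]

lemma qbinZ_pascal' {a : ℤ} (ha : 0 < a) (b : ℤ) :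
    qbinZ a b = q ^ (a - b) * qbinZ (a - 1) (b - 1) + qbinZ (a - 1) b := by
  rw [← qbinZ_symm, qbinZ_pascal ha, show a - b - 1 = a - 1 - b by ring, qbinZ_symm,
    show a - b = a - 1 - (b - 1) by ring, qbinZ_symm, add_comm]

lemma qbinZ_add_two_sub_qbinZ {a : ℤ} (ha : 0 ≤ a) (b : ℤ) :
    qbinZ (a + 2) b - qbinZ a (b - 1) =
      q ^ b * qbinZ a b + q ^ (a + 2 - b) * qbinZ (a + 1) (b - 1) := by
  have h₁ := qbinZ_pascal' (a := a + 2) (by omega) b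
  have h₂ := qbinZ_pascal (a := a + 1) (by omega) b
  rw [show a + 2 - 1 = a + 1 by ring] at h₁
  rw [add_sub_cancel_right] at h₂
  rw [h₁, h₂]
  ring

lemma pentagonal_exponent_sub_one (j : ℤ) :
    (j - 1) * (3 * (j - 1) + 1) / 2 = j * (3 * j + 1) / 2 - 3 * j + 1 := by
  rw [show (j - 1) * (3 * (j - 1) + 1) = j * (3 * j + 1) + (1 - 3 * j) * 2 by ring,
    Int.add_mul_ediv_right _ _ two_ne_zero]
  ring

noncomputable def pentSummand (n j : ℤ) : RatFunc ℚ :=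
  (-1) ^ j * q ^ (j * (3 * j + 1) / 2) * qbinZ (2 * n - j) (n + j)

noncomputable def pentTelescoper (n j : ℤ) : RatFunc ℚ :=
  (-1) ^ j * q ^ (j * (3 * j + 1) / 2 + n + j) * qbinZ (2 * n - 2 - j) (n + j)

lemma pentSummand_eq_zero {n j : ℤ} (h : j < -n ∨ n < 2 * j) : pentSummand n j = 0 := by
  rcases h with h | h
  · rw [pentSummand, qbinZ_eq_zero_of_neg (by omega), mul_zero]
  · rw [pentSummand, qbinZ_eq_zero_of_lt (by omega), mul_zero]

lemma pentSummand_sub_pentSummand {n : ℤ} (hn : 1 ≤ n) (j : ℤ) :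
    pentSummand n j - pentSummand (n - 1) j = pentTelescoper n j - pentTelescoper n (j - 1) := by
  by_cases hj : j ≤ 2 * n - 2
  · have h := qbinZ_add_two_sub_qbinZ (a := 2 * n - 2 - j) (by omega) (n + j)
    rw [show 2 * n - 2 - j + 2 = 2 * n - j by ring, show 2 * n - 2 - j + 1 = 2 * n - 1 - j by ring,
      show 2 * n - j - (n + j) = n - 2 * j by ring] at h
    rw [pentSummand, pentSummand, pentTelescoper, pentTelescoper, pentagonal_exponent_sub_one,
      show 2 * (n - 1) - j = 2 * n - 2 - j by ring, show n - 1 + j = n + j - 1 by ring,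
      show 2 * n - 2 - (j - 1) = 2 * n - 1 - j by ring, show n + (j - 1) = n + j - 1 by ring,
      zpow_sub_one₀ (by norm_num)]
    set e := j * (3 * j + 1) / 2
    rw [show e - 3 * j + 1 + n + (j - 1) = e + (n - 2 * j) by ring,
      show e + n + j = e + (n + j) by ring, zpow_add₀ RatFunc.X_ne_zero e,
      zpow_add₀ RatFunc.X_ne_zero e]
    linear_combination (-1) ^ j * q ^ e * h
  · -- `2 * n - 2 - j < 0` is out of reach of the recurrence, but all four coefficients vanish
    simp only [pentSummand, pentTelescoper, qbinZ_eq_zero_of_lt (by omega : 2 * n - j < n + j),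
      qbinZ_eq_zero_of_lt (by omega : 2 * (n - 1) - j < n - 1 + j),
      qbinZ_eq_zero_of_lt (by omega : 2 * n - 2 - j < n + j),
      qbinZ_eq_zero_of_lt (by omega : 2 * n - 2 - (j - 1) < n + (j - 1)), mul_zero, sub_self]

lemma sum_pentSummand_add_one {n : ℤ} (hn : 0 ≤ n) :
    ∑ j ∈ Icc (-(n + 1)) (n + 1), pentSummand (n + 1) j =
      ∑ j ∈ Icc (-n) n, pentSummand n j := by
  have hstep (j : ℤ) : pentSummand (n + 1) j =
      pentSummand n j + (pentTelescoper (n + 1) j - pentTelescoper (n + 1) (j - 1)) := by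
    rw [← pentSummand_sub_pentSummand (by omega), add_sub_cancel_right, add_sub_cancel]
  have hlast : pentTelescoper (n + 1) (n + 1) = 0 := by
    rw [pentTelescoper, qbinZ_eq_zero_of_lt (by omega), mul_zero]
  have hfirst : pentTelescoper (n + 1) (-(n + 1) - 1) = 0 := by
    rw [pentTelescoper, qbinZ_eq_zero_of_neg (by omega), mul_zero]
  rw [sum_congr rfl fun j _ ↦ hstep j, sum_add_distrib, Int.sum_Icc_sub_sub_one _ (by omega),
    hlast, hfirst, sub_zero, add_zero]
  refine (sum_subset (Icc_subset_Icc (by omega) (by omega)) fun j hj hj' ↦ ?_).symm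
  simp only [mem_Icc] at hj hj'
  exact pentSummand_eq_zero (by omega)

theorem stmt2 (L : ℕ) :
    ∑ j ∈ Finset.Icc (-(L : ℤ)) (L : ℤ),
      (-1 : RatFunc ℚ) ^ j * RatFunc.X ^ (j * (3 * j + 1) / 2) *
        qbinZ (2 * L - j) (L + j) = 1 := by
  induction L with
  | zero => simp [qbinZ_self]
  | succ L ih =>
    push_cast
    exact (sum_pentSummand_add_one L.cast_nonneg).trans ih
end

section
/- For nonnegative integers n and integers r, t with 0 ≤ r, t ≤ n, ∑_{s=0}^{n-r} qbinom(n-r, s) · qbinom(n-s, t) · q^{s(s+2r+2t-2n+1)/2} · (-1)^s = qbinom(r, n-t), as an identity of Laurent polynomials (or rational functions) in q. -/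
/-!
Put `m = n - r` and call the left-hand side `S(m, r, t)`. Splitting `qbin (m+1) s` by the q-Pascal rule
and shifting the index gives `S(m+1, r, t) = S(m, r+1, t) - q^(t-m) S(m, r, t)`; the quadratic exponent
is exactly the one that makes the powers of `q` match. By the other q-Pascal rule `qbin r k` with
`t + k = m + r` satisfies the same recursion, and for `m = 0` both sides are `qbin r t = qbin r (r - t)`,
so induction on `m` proves the identity.
-/

open Finset

open RatFunc

noncomputable def qfac (b : ℕ) : RatFunc ℚ :=
  ∏ i ∈ range b, (1 - X ^ (i + 1))

lemma one_sub_X_pow_succ_ne_zero (k : ℕ) : (1 - X ^ (k + 1) : RatFunc ℚ) ≠ 0 := by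
  rw [← algebraMap_X, ← map_pow, ← map_one (algebraMap (Polynomial ℚ) _), ← map_sub]
  exact algebraMap_ne_zero fun h => by simpa using congrArg (Polynomial.coeff · 0) h

lemma qfac_ne_zero (b : ℕ) : qfac b ≠ 0 :=
  prod_ne_zero_iff.mpr fun i _ => one_sub_X_pow_succ_ne_zero i

lemma qfac_succ (b : ℕ) : qfac (b + 1) = qfac b * (1 - X ^ (b + 1)) :=
  prod_range_succ _ b

lemma qbin_add_eq_qfac_div (b c : ℕ) : qbin (b + c) b = qfac (b + c) / (qfac b * qfac c) := by
  have hnum : (∏ i ∈ range b, (1 - X ^ (b + c - i) : RatFunc ℚ)) * qfac c = qfac (b + c) := by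
    rw [qfac, qfac, add_comm b c, prod_range_add, mul_comm,
      ← prod_range_reflect (fun i => (1 - X ^ (c + i + 1) : RatFunc ℚ)) b]
    congr 1
    refine prod_congr rfl fun i hi => ?_
    rw [mem_range] at hi
    congr 2
    omega
  rw [qbin, if_pos (Nat.le_add_right b c), prod_div_distrib, ← hnum]
  change _ / qfac b = _
  field_simp [qfac_ne_zero]

lemma qbin_eq_zero_of_lt {a b : ℕ} (h : a < b) : qbin a b = 0 := by
  rw [qbin, if_neg (by omega)]

lemma qbin_zero_right (a : ℕ) : qbin a 0 = 1 := by
  simp [qbin]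

lemma qbin_self (a : ℕ) : qbin a a = 1 := by
  have h := qbin_add_eq_qfac_div a 0
  rw [add_zero] at h
  rw [h, show qfac 0 = 1 from prod_range_zero _, mul_one, div_self (qfac_ne_zero a)]

lemma qbin_symm_of_add_eq {a b c : ℕ} (h : b + c = a) : qbin a b = qbin a c := by
  subst h
  rw [qbin_add_eq_qfac_div, add_comm b c, qbin_add_eq_qfac_div, mul_comm]

lemma qbin_succ_succ_of_add_eq {a b c : ℕ} (h : b + c + 1 = a) :
    qbin (a + 1) (b + 1) = X ^ (b + 1) * qbin a (b + 1) + qbin a b := by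
  subst h
  rw [show b + c + 1 + 1 = (b + 1) + (c + 1) by omega, qbin_add_eq_qfac_div,
    show b + c + 1 = (b + 1) + c by omega, qbin_add_eq_qfac_div,
    show b + 1 + c = b + (c + 1) by omega, qbin_add_eq_qfac_div,
    show b + 1 + (c + 1) = b + (c + 1) + 1 by omega,
    qfac_succ (b + (c + 1)), qfac_succ b, qfac_succ c]
  have hX : (X : RatFunc ℚ) ^ (b + (c + 1) + 1) = X ^ (b + 1) * X ^ (c + 1) := by
    rw [← pow_add]; congr 1; omega
  rw [hX]
  field_simp [one_sub_X_pow_succ_ne_zero, qfac_ne_zero]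
  ring

lemma qbin_succ_succ (a b : ℕ) :
    qbin (a + 1) (b + 1) = X ^ (b + 1) * qbin a (b + 1) + qbin a b := by
  rcases lt_trichotomy b a with h | rfl | h
  · exact qbin_succ_succ_of_add_eq (c := a - b - 1) (by omega)
  · simp [qbin_self, qbin_eq_zero_of_lt]
  · simp [qbin_eq_zero_of_lt, h, Nat.lt_succ_of_lt h]

lemma qbin_succ_succ' (a b : ℕ) :
    qbin (a + 1) (b + 1) = qbin a (b + 1) + X ^ ((a : ℤ) - b) * qbin a b := by
  rcases lt_trichotomy b a with h | rfl | h
  · obtain ⟨c, rfl⟩ := Nat.exists_eq_add_of_lt h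
    rw [qbin_symm_of_add_eq (show (b + 1) + (c + 1) = b + c + 1 + 1 by omega),
      qbin_succ_succ_of_add_eq (show c + b + 1 = b + c + 1 by omega),
      qbin_symm_of_add_eq (show (c + 1) + b = b + c + 1 by omega),
      qbin_symm_of_add_eq (show c + (b + 1) = b + c + 1 by omega),
      show ((b + c + 1 : ℕ) : ℤ) - b = ((c + 1 : ℕ) : ℤ) by push_cast; ring, zpow_natCast]
    ring
  · simp [qbin_self, qbin_eq_zero_of_lt]
  · simp [qbin_eq_zero_of_lt, h, Nat.lt_succ_of_lt h]

def qExponent (m t s : ℤ) : ℤ := s * (s + 2 * t - 2 * m + 1) / 2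

lemma qExponent_succ_left (m t s : ℤ) : qExponent (m + 1) t s = qExponent m t s - s := by
  rw [qExponent, qExponent, show s * (s + 2 * t - 2 * (m + 1) + 1)
    = s * (s + 2 * t - 2 * m + 1) + (-s) * 2 by ring, Int.add_mul_ediv_right _ _ two_ne_zero]
  ring

lemma qExponent_succ_succ (m t s : ℤ) :
    qExponent (m + 1) t (s + 1) = qExponent m t s + (t - m) := by
  rw [qExponent, qExponent, show (s + 1) * (s + 1 + 2 * t - 2 * (m + 1) + 1)
    = s * (s + 2 * t - 2 * m + 1) + (t - m) * 2 by ring, Int.add_mul_ediv_right _ _ two_ne_zero]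

noncomputable def altSummand (m r t s : ℕ) : RatFunc ℚ :=
  qbin m s * qbin (m + r - s) t * X ^ qExponent m t s * (-1) ^ s

noncomputable def altSum (m r t : ℕ) : RatFunc ℚ :=
  ∑ s ∈ range (m + 1), altSummand m r t s

lemma altSummand_succ_zero (m r t : ℕ) : altSummand (m + 1) r t 0 = altSummand m (r + 1) t 0 := by
  simp [altSummand, qExponent, qbin_zero_right, show m + 1 + r = m + (r + 1) by omega]

lemma altSummand_succ_succ (m r t s : ℕ) :
    altSummand (m + 1) r t (s + 1)
      = altSummand m (r + 1) t (s + 1) - X ^ ((t : ℤ) - m) * altSummand m r t s := by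
  have hleft : (X : RatFunc ℚ) ^ qExponent m t (s + 1)
      = X ^ qExponent (m + 1) t (s + 1) * X ^ (s + 1) := by
    rw [← zpow_natCast, ← zpow_add₀ X_ne_zero, qExponent_succ_left]
    push_cast
    ring_nf
  have hright : (X : RatFunc ℚ) ^ qExponent (m + 1) t (s + 1)
      = X ^ qExponent m t s * X ^ ((t : ℤ) - m) := by
    rw [qExponent_succ_succ, zpow_add₀ X_ne_zero]
  simp only [altSummand, qbin_succ_succ m s, Nat.cast_succ, hleft, hright,
    show m + 1 + r - (s + 1) = m + r - s by omega, show m + (r + 1) - (s + 1) = m + r - s by omega]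
  ring

lemma altSummand_eq_zero_of_lt {m s : ℕ} (r t : ℕ) (h : m < s) : altSummand m r t s = 0 := by
  simp [altSummand, qbin_eq_zero_of_lt h]

lemma altSum_eq_zero_of_lt {m r t : ℕ} (h : m + r < t) : altSum m r t = 0 :=
  sum_eq_zero fun s _ => by simp [altSummand, qbin_eq_zero_of_lt (show m + r - s < t by omega)]

lemma altSum_succ (m r t : ℕ) :
    altSum (m + 1) r t = altSum m (r + 1) t - X ^ ((t : ℤ) - m) * altSum m r t := by
  have hwide : altSum m (r + 1) t = ∑ s ∈ range (m + 2), altSummand m (r + 1) t s := by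
    rw [altSum, sum_range_succ _ (m + 1), altSummand_eq_zero_of_lt _ _ (Nat.lt_succ_self m), add_zero]
  rw [hwide, altSum, altSum, sum_range_succ', sum_range_succ' _ (m + 1), altSummand_succ_zero,
    mul_sum]
  simp only [altSummand_succ_succ, sum_sub_distrib]
  ring

theorem altSum_eq_qbin {m r k t : ℕ} (h : t + k = m + r) : altSum m r t = qbin r k := by
  induction m generalizing r k t with
  | zero =>
    simp [altSum, altSummand, qbin_zero_right, qExponent, qbin_symm_of_add_eq (by omega : t + k = r)]
  | succ m ih =>
    rw [altSum_succ]
    cases k with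
    | zero =>
      rw [ih (k := 0) (by omega), altSum_eq_zero_of_lt (by omega), qbin_zero_right, qbin_zero_right]
      ring
    | succ k =>
      rw [ih (k := k + 1) (by omega), ih (k := k) (by omega), qbin_succ_succ',
        show (t : ℤ) - m = r - k by omega]
      ring

theorem stmt5 (n r t : ℕ) (hr : r ≤ n) (ht : t ≤ n) :
    ∑ s ∈ Finset.range (n - r + 1),
      qbin (n - r) s * qbin (n - s) t *
        RatFunc.X ^ ((s : ℤ) * ((s : ℤ) + 2 * r + 2 * t - 2 * n + 1) / 2) *
        (-1 : RatFunc ℚ) ^ s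
    = qbin r (n - t) := by
  rw [← altSum_eq_qbin (m := n - r) (show t + (n - t) = n - r + r by omega), altSum]
  refine sum_congr rfl fun s _ => ?_
  rw [altSummand, qExponent, Nat.sub_add_cancel hr, Nat.cast_sub hr]
  ring_nf
end

section
/- Let m, n ≥ 1 and let x_1, …, x_m be complex numbers with x_k ≠ -1 for all k and x_1⋯x_m ≠ 1. Then ∑_{r_1,…,r_m ≤ n} ∏_{k=1}^{m} C(n-r_k, r_{k+1}) · (-x_k)^{r_k} / (1+x_k)^{r_k + r_{k+1}} = (1 - (x_1⋯x_m)^{n+1}) / (1 - x_1⋯x_m) · ∏_{k=1}^{m} (1+x_k)^{-n}, where r_{m+1} := r_1. -/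
/-!
Each factor of the summand is `(1 + x_k)⁻ⁿ` times an entry of the `n`-th symmetric power of the
transfer matrix `M_k = !![0, -x_k; 1, 1 + x_k]`, acting on binary forms of degree `n`, so the
cyclic sum is the trace of the symmetric power of `M = M_1 ⋯ M_m`. The columns of every `M_k` sum
to `1`, hence `(1, 1)` is a left eigenvector of `M` for the eigenvalue `1`, and `M` is conjugate
to an upper triangular matrix with diagonal `(det M, 1) = (x_1 ⋯ x_m, 1)`. The trace of its `n`-th
symmetric power is `1 + p + ⋯ + pⁿ` with `p = x_1 ⋯ x_m`.
-/

open Finset Matrix Polynomial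

section HomSubst

variable {R : Type*} [CommSemiring R]

/-- `F ↦ B ^ n * F (A / B)`, the substitution into the degree-`n` homogenisation of `F`. -/
noncomputable def homSubst (n : ℕ) (A B : R[X]) : R[X] →ₗ[R] R[X] :=
  ∑ s ∈ range (n + 1), (lcoeff R s).smulRight (A ^ s * B ^ (n - s))

variable {A B : R[X]}

theorem homSubst_apply (n : ℕ) (F : R[X]) :
    homSubst n A B F = ∑ s ∈ range (n + 1), F.coeff s • (A ^ s * B ^ (n - s)) := by
  simp [homSubst]

theorem homSubst_monomial {n i : ℕ} (hi : i ≤ n) (a : R) :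
    homSubst n A B (monomial i a) = a • (A ^ i * B ^ (n - i)) := by
  simp [homSubst_apply, coeff_monomial, ite_smul, Nat.lt_succ_of_le hi]

theorem homSubst_mul {n₁ n₂ : ℕ} {F G : R[X]} (hF : F.natDegree ≤ n₁)
    (hG : G.natDegree ≤ n₂) :
    homSubst (n₁ + n₂) A B (F * G) = homSubst n₁ A B F * homSubst n₂ A B G := by
  rw [as_sum_range' F (n₁ + 1) (Nat.lt_succ_of_le hF),
    as_sum_range' G (n₂ + 1) (Nat.lt_succ_of_le hG), sum_mul_sum, map_sum, map_sum, map_sum,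
    sum_mul_sum]
  refine sum_congr rfl fun i hi => ?_
  rw [map_sum]
  refine sum_congr rfl fun j hj => ?_
  rw [mem_range, Nat.lt_succ_iff] at hi hj
  rw [monomial_mul_monomial, homSubst_monomial (by omega), homSubst_monomial hi,
    homSubst_monomial hj, show n₁ + n₂ - (i + j) = (n₁ - i) + (n₂ - j) by omega]
  simp only [smul_eq_C_mul, map_mul]
  ring

theorem natDegree_linear_pow_le (a b : R) (r : ℕ) : ((C a * X + C b) ^ r).natDegree ≤ r := by
  have h := natDegree_pow_le_of_le r (show (C a * X + C b).natDegree ≤ 1 by compute_degree)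
  rwa [mul_one] at h

theorem homSubst_linear (a b : R) : homSubst 1 A B (C a * X + C b) = a • A + b • B := by
  simp [homSubst_apply, sum_range_succ, coeff_C, coeff_X, add_comm]

theorem homSubst_linear_pow (a b : R) (r : ℕ) :
    homSubst r A B ((C a * X + C b) ^ r) = (a • A + b • B) ^ r := by
  induction r with
  | zero => simp [homSubst_apply]
  | succ r ih =>
    rw [pow_succ, homSubst_mul (natDegree_linear_pow_le a b r) (by compute_degree), ih,
      homSubst_linear, pow_succ]

theorem homSubst_linear_pow_mul_linear_pow {n r : ℕ} (hr : r ≤ n) (a b c d : R) :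
    homSubst n A B ((C a * X + C b) ^ r * (C c * X + C d) ^ (n - r)) =
      (a • A + b • B) ^ r * (c • A + d • B) ^ (n - r) := by
  obtain ⟨k, rfl⟩ := Nat.exists_eq_add_of_le hr
  rw [Nat.add_sub_cancel_left, homSubst_mul (natDegree_linear_pow_le a b r)
    (natDegree_linear_pow_le c d k), homSubst_linear_pow, homSubst_linear_pow]

end HomSubst

section SymPow

variable {R : Type*} [CommSemiring R] (n : ℕ)

/-- The `n`-th symmetric power of `g` on binary forms of degree `n`, dehomogenised by
`X = u / v`: row `r` holds the coefficients of the image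
`(g₀₀ X + g₀₁) ^ r * (g₁₀ X + g₁₁) ^ (n - r)` of `X ^ r`. -/
noncomputable def symPowMatrix (g : Matrix (Fin 2) (Fin 2) R) :
    Matrix (Fin (n + 1)) (Fin (n + 1)) R :=
  Matrix.of fun r s =>
    ((C (g 0 0) * X + C (g 0 1)) ^ (r : ℕ) * (C (g 1 0) * X + C (g 1 1)) ^ (n - r)).coeff s

theorem symPowMatrix_mul (g h : Matrix (Fin 2) (Fin 2) R) :
    symPowMatrix n (g * h) = symPowMatrix n g * symPowMatrix n h := by
  have hrow : ∀ i, g i 0 • (C (h 0 0) * X + C (h 0 1)) + g i 1 • (C (h 1 0) * X + C (h 1 1)) =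
      C ((g * h) i 0) * X + C ((g * h) i 1) := fun i => by
    simp only [Matrix.mul_apply, Fin.sum_univ_two, smul_eq_C_mul, map_add, map_mul]
    ring
  ext r t
  rw [Matrix.mul_apply]
  simp only [symPowMatrix, Matrix.of_apply]
  rw [← hrow, ← hrow, ← homSubst_linear_pow_mul_linear_pow (Nat.lt_succ_iff.mp r.isLt),
    homSubst_apply, finsetSum_coeff, ← Fin.sum_univ_eq_sum_range]
  simp only [coeff_smul, smul_eq_mul]

theorem symPowMatrix_one : symPowMatrix n (1 : Matrix (Fin 2) (Fin 2) R) = 1 := by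
  ext r s
  simp [symPowMatrix, Matrix.one_apply, coeff_X_pow, Fin.ext_iff, eq_comm]

@[simps]
noncomputable def symPowHom :
    Matrix (Fin 2) (Fin 2) R →* Matrix (Fin (n + 1)) (Fin (n + 1)) R where
  toFun := symPowMatrix n
  map_one' := symPowMatrix_one n
  map_mul' := symPowMatrix_mul n

theorem trace_symPowMatrix_upperTriangular (a b : R) :
    (symPowMatrix n !![a, b; 0, 1]).trace = ∑ r ∈ range (n + 1), a ^ r := by
  rw [Matrix.trace, ← Fin.sum_univ_eq_sum_range]
  refine sum_congr rfl fun r _ => ?_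
  have h := coeff_pow_of_natDegree_le (m := (r : ℕ))
    (show (C a * X + C b).natDegree ≤ 1 by compute_degree)
  simpa [symPowMatrix] using h

end SymPow

theorem vecMul_list_prod_eq_of_forall {ι R : Type*} [Fintype ι] [DecidableEq ι]
    [CommSemiring R] {v : ι → R} {l : List (Matrix ι ι R)} (h : ∀ G ∈ l, v ᵥ* G = v) :
    v ᵥ* l.prod = v := by
  induction l with
  | nil => simp
  | cons G l ih =>
    rw [List.prod_cons, ← vecMul_vecMul, h G List.mem_cons_self,
      ih fun G' hG' => h G' (List.mem_cons_of_mem G hG')]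

section Trace

variable {R : Type*} [CommRing R] (n : ℕ)

/-- If the columns of `G` sum to `1`, then `(1, 1)` is a left eigenvector for the eigenvalue `1`,
so `G` is conjugate to an upper triangular matrix with diagonal `(det G, 1)`. -/
theorem trace_symPowMatrix_of_vecMul_one {G : Matrix (Fin 2) (Fin 2) R}
    (hG : (1 : Fin 2 → R) ᵥ* G = 1) :
    (symPowMatrix n G).trace = ∑ r ∈ range (n + 1), G.det ^ r := by
  have h0 := congrFun hG 0
  have h1 := congrFun hG 1
  simp only [vecMul, dotProduct, Fin.sum_univ_two, Pi.one_apply, one_mul] at h0 h1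
  set T : Matrix (Fin 2) (Fin 2) R := !![1, 0; 1, 1]
  set T' : Matrix (Fin 2) (Fin 2) R := !![1, 0; -1, 1]
  have hinv : T' * T = 1 := by
    simp [T, T', one_fin_two]
  have hconj : T * G * T' = !![G.det, G 0 1; 0, 1] := by
    rw [det_fin_two, eta_fin_two G]
    ext i j
    fin_cases i <;> fin_cases j <;> simp [T, T']
    · linear_combination G 0 1 * h0 - G 0 0 * h1
    · linear_combination h0 - h1
    · linear_combination h1
  calc (symPowMatrix n G).trace
      = (symPowMatrix n T' * (symPowMatrix n T * symPowMatrix n G)).trace := by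
        rw [← symPowMatrix_mul, ← symPowMatrix_mul, ← mul_assoc, hinv, one_mul]
    _ = (symPowMatrix n (T * G * T')).trace := by
        rw [trace_mul_comm, symPowMatrix_mul, symPowMatrix_mul]
    _ = ∑ r ∈ range (n + 1), G.det ^ r := by
        rw [hconj, trace_symPowMatrix_upperTriangular]

end Trace

section CyclicSum

variable {I R : Type*} [Fintype I] [DecidableEq I] [CommSemiring R]

theorem sum_prod_mul_apply_eq_trace_list_prod_mul {m : ℕ} (A : Fin m → Matrix I I R)
    (B : Matrix I I R) :
    ∑ s : Fin (m + 1) → I,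
        (∏ k : Fin m, A k (s k.castSucc) (s k.succ)) * B (s (Fin.last m)) (s 0) =
      ((List.ofFn A).prod * B).trace := by
  induction m generalizing B with
  | zero =>
    rw [← (Equiv.funUnique (Fin 1) I).symm.sum_comp]
    simp [trace]
  | succ m ih =>
    rw [List.ofFn_succ, List.prod_cons, mul_assoc, trace_mul_comm, mul_assoc,
      ← ih (fun k => A k.succ), ← (Fin.consEquiv fun _ => I).sum_comp, Fintype.sum_prod_type,
      sum_comm]
    refine sum_congr rfl fun s _ => ?_
    simp only [Fin.consEquiv_apply, Fin.prod_univ_succ, Fin.cons_zero, Fin.cons_succ,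
      Fin.castSucc_zero, ← Fin.succ_castSucc, ← Fin.succ_last, mul_apply, mul_sum]
    refine sum_congr rfl fun t _ => ?_
    ring

theorem sum_prod_cyclic_eq_trace_list_prod {m : ℕ} (A : Fin (m + 1) → Matrix I I R) :
    ∑ s : Fin (m + 1) → I, ∏ k, A k (s k) (s (k + 1)) = (List.ofFn A).prod.trace := by
  rw [List.ofFn_succ', List.prod_concat, ← sum_prod_mul_apply_eq_trace_list_prod_mul]
  simp only [Fin.prod_univ_castSucc, Fin.coeSucc_eq_succ, Fin.last_add_one]

end CyclicSum

section Transfer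

variable {R : Type*} [CommRing R]

def transferMatrix (x : R) : Matrix (Fin 2) (Fin 2) R :=
  !![0, -x; 1, 1 + x]

theorem one_vecMul_transferMatrix (x : R) : (1 : Fin 2 → R) ᵥ* transferMatrix x = 1 := by
  ext i
  fin_cases i <;> simp [transferMatrix, vecMul, dotProduct, Fin.sum_univ_two]

theorem det_transferMatrix (x : R) : (transferMatrix x).det = x := by
  simp [transferMatrix, det_fin_two]

theorem symPowMatrix_transferMatrix_apply (n : ℕ) (x : R) (r s : Fin (n + 1)) :
    symPowMatrix n (transferMatrix x) r s =
      (-x) ^ (r : ℕ) * ((1 + x) ^ (n - r - s) * (n - r).choose s) := by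
  simp only [symPowMatrix, transferMatrix, of_apply, cons_val', cons_val_zero, cons_val_one,
    empty_val', cons_val_fin_one, map_zero, zero_mul, zero_add, map_one, one_mul]
  rw [← C_pow, coeff_C_mul, coeff_X_add_C_pow]

end Transfer

theorem choose_mul_pow_div_eq_symPowMatrix_transferMatrix {K : Type*} [Field K] (n : ℕ) {x : K}
    (hx : 1 + x ≠ 0) (r s : Fin (n + 1)) :
    ((n - r).choose s : K) * (-x) ^ (r : ℕ) / (1 + x) ^ ((r : ℕ) + s) =
      ((1 + x) ^ n)⁻¹ * symPowMatrix n (transferMatrix x) r s := by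
  rw [symPowMatrix_transferMatrix_apply]
  rcases le_or_gt (s : ℕ) (n - r) with hs | hs
  · have hpow : (1 + x) ^ n = (1 + x) ^ ((r : ℕ) + s) * (1 + x) ^ (n - r - s) := by
      rw [← pow_add]
      congr 1
      omega
    rw [hpow]
    field_simp
  · rw [Nat.choose_eq_zero_of_lt hs]
    simp

theorem stmt13_general (m n : ℕ) (hm : 0 < m) (x : Fin m → ℂ)
    (hx : ∀ k, x k ≠ -1) (hprod : ∏ k, x k ≠ 1) :
    ∑ r : Fin m → Fin (n + 1), ∏ k : Fin m,
      (((n - (r k : ℕ)).choose (r ⟨((k : ℕ) + 1) % m, Nat.mod_lt _ hm⟩ : ℕ) : ℂ) *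
        (-(x k)) ^ (r k : ℕ) /
        (1 + x k) ^ ((r k : ℕ) + (r ⟨((k : ℕ) + 1) % m, Nat.mod_lt _ hm⟩ : ℕ)))
    = (1 - (∏ k, x k) ^ (n + 1)) / (1 - ∏ k, x k) * ∏ k : Fin m, ((1 + x k) ^ n)⁻¹ := by
  obtain ⟨m, rfl⟩ := Nat.exists_eq_add_one_of_ne_zero hm.ne'
  have hsucc : ∀ k : Fin (m + 1),
      (⟨((k : ℕ) + 1) % (m + 1), Nat.mod_lt _ hm⟩ : Fin (m + 1)) = k + 1 := fun k =>
    Fin.ext (by simp [Fin.val_add])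
  have h1x : ∀ k, 1 + x k ≠ 0 := fun k h => hx k (by linear_combination h)
  set M := List.ofFn fun k => transferMatrix (x k)
  have hcol : (1 : Fin 2 → ℂ) ᵥ* M.prod = 1 :=
    vecMul_list_prod_eq_of_forall
      (List.forall_mem_ofFn_iff.mpr fun k => one_vecMul_transferMatrix (x k))
  have hdet : M.prod.det = ∏ k, x k := by
    rw [← coe_detMonoidHom, map_list_prod, List.map_ofFn, List.prod_ofFn]
    exact prod_congr rfl fun k _ => det_transferMatrix (x k)
  calc _ = ∑ r : Fin (m + 1) → Fin (n + 1),
        ∏ k, ((1 + x k) ^ n)⁻¹ * symPowMatrix n (transferMatrix (x k)) (r k) (r (k + 1)) := by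
        simp_rw [hsucc, choose_mul_pow_div_eq_symPowMatrix_transferMatrix n (h1x _)]
    _ = (∏ k, ((1 + x k) ^ n)⁻¹) * (symPowMatrix n M.prod).trace := by
        rw [← symPowHom_apply, map_list_prod, List.map_ofFn,
          ← sum_prod_cyclic_eq_trace_list_prod, mul_sum]
        simp only [Function.comp_apply, symPowHom_apply, prod_mul_distrib]
    _ = _ := by
        rw [trace_symPowMatrix_of_vecMul_one n hcol, hdet, range_eq_Ico,
          geom_sum_Ico' hprod (Nat.zero_le _), pow_zero, mul_comm]

theorem stmt13 (m n : ℕ) (hm : 0 < m) (hn : 0 < n) (x : Fin m → ℂ)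
    (hx : ∀ k, x k ≠ -1) (hprod : ∏ k, x k ≠ 1) :
    ∑ r : Fin m → Fin (n + 1), ∏ k : Fin m,
      (((n - (r k : ℕ)).choose (r ⟨((k : ℕ) + 1) % m, Nat.mod_lt _ hm⟩ : ℕ) : ℂ) *
        (-(x k)) ^ (r k : ℕ) /
        (1 + x k) ^ ((r k : ℕ) + (r ⟨((k : ℕ) + 1) % m, Nat.mod_lt _ hm⟩ : ℕ)))
    = (1 - (∏ k, x k) ^ (n + 1)) / (1 - ∏ k, x k) * ∏ k : Fin m, ((1 + x k) ^ n)⁻¹ :=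
  stmt13_general m n hm x hx hprod
end

section
/- For all nonnegative integers n and elements x, y of a commutative ring, ∑_{k=0}^{⌊n/2⌋} C(n-k, k) (x+y)^{n-2k} (-xy)^k = ∑_{i=0}^{n} x^i y^{n-i} (equivalently (x^{n+1} - y^{n+1})/(x-y)). -/
/-!
Both sides satisfy `u (n + 2) = (x + y) * u (n + 1) - x * y * u n` with `u 0 = 1` and
`u 1 = x + y`. For `L n = ∑ₖ C(n - k, k) a ^ (n - 2k) b ^ k`, Pascal's rule
`C(n + 1 - k, k + 1) = C(n - k, k) + C(n - k, k + 1)` applied termwise gives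
`L (n + 2) = a * L (n + 1) + b * L n`. For `h n = ∑ᵢ x ^ i y ^ (n - i)`, splitting off the top
term gives `h (n + 1) = x ^ (n + 1) + y * h n`, and two instances of this combine to the recurrence.
-/

open Finset

section LucasSum

variable {R : Type*} [CommSemiring R] (a b : R)

def lucasTerm (n k : ℕ) : R := ((n - k).choose k : R) * a ^ (n - 2 * k) * b ^ k

def lucasSum (n : ℕ) : R := ∑ k ∈ range (n / 2 + 1), lucasTerm a b n k

theorem lucasTerm_eq_zero {n k : ℕ} (hk : n < 2 * k) : lucasTerm a b n k = 0 := by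
  simp [lucasTerm, Nat.choose_eq_zero_of_lt (show n - k < k by omega)]

theorem lucasSum_eq_sum_range {n m : ℕ} (hm : n / 2 < m) :
    lucasSum a b n = ∑ k ∈ range m, lucasTerm a b n k := by
  refine sum_subset (range_subset_range.2 (by omega)) fun k hkm hkn => ?_
  simp only [mem_range] at hkm hkn
  exact lucasTerm_eq_zero a b (by omega)

theorem lucasTerm_add_two_succ (n k : ℕ) :
    lucasTerm a b (n + 2) (k + 1) = a * lucasTerm a b (n + 1) (k + 1) + b * lucasTerm a b n k := by
  have pascal : (n + 1 - k).choose (k + 1) = (n - k).choose k + (n - k).choose (k + 1) := by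
    rcases le_or_gt k n with hk | hk
    · rw [show n + 1 - k = n - k + 1 by omega, Nat.choose_succ_succ]
    · rw [show n - k = 0 by omega, show n + 1 - k = 0 by omega,
        Nat.choose_eq_zero_of_lt (by omega : 0 < k), Nat.choose_eq_zero_of_lt (by omega : 0 < k + 1)]
  have shift : a * ((n - k).choose (k + 1) * a ^ (n + 1 - 2 * (k + 1)) * b ^ (k + 1) : R) =
      (n - k).choose (k + 1) * a ^ (n - 2 * k) * b ^ (k + 1) := by
    -- for `n < 2 * k + 1` the exponent `n + 1 - 2 * (k + 1)` is truncated, but the coefficient vanishes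
    rcases le_or_gt (2 * k + 1) n with hk | hk
    · rw [show n - 2 * k = n + 1 - 2 * (k + 1) + 1 by omega, pow_succ]
      ring
    · simp [Nat.choose_eq_zero_of_lt (show n - k < k + 1 by omega)]
  simp only [lucasTerm, show n + 2 - (k + 1) = n + 1 - k by omega,
    show n + 2 - 2 * (k + 1) = n - 2 * k by omega, show n + 1 - (k + 1) = n - k by omega, pascal]
  push_cast
  rw [shift]
  ring

theorem lucasSum_add_two (n : ℕ) :
    lucasSum a b (n + 2) = a * lucasSum a b (n + 1) + b * lucasSum a b n := by
  rw [lucasSum_eq_sum_range a b (n := n + 2) (m := n + 3) (by omega),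
    lucasSum_eq_sum_range a b (n := n + 1) (m := n + 3) (by omega),
    lucasSum_eq_sum_range a b (n := n) (m := n + 2) (by omega),
    sum_range_succ', sum_range_succ' _ (n + 2)]
  have h₀ : lucasTerm a b (n + 2) 0 = a * lucasTerm a b (n + 1) 0 := by
    simp [lucasTerm, pow_succ']
  simp only [lucasTerm_add_two_succ, sum_add_distrib, h₀, mul_add, mul_sum]
  abel

end LucasSum

theorem geom_sum₂_add_two {R : Type*} [CommRing R] (x y : R) (n : ℕ) :
    ∑ i ∈ range (n + 3), x ^ i * y ^ (n + 2 - i) =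
      (x + y) * ∑ i ∈ range (n + 2), x ^ i * y ^ (n + 1 - i) -
        x * y * ∑ i ∈ range (n + 1), x ^ i * y ^ (n - i) := by
  have h₂ : ∑ i ∈ range (n + 3), x ^ i * y ^ (n + 2 - i) =
      x ^ (n + 2) + y * ∑ i ∈ range (n + 2), x ^ i * y ^ (n + 1 - i) :=
    geom_sum₂_succ_eq x y
  have h₁ : ∑ i ∈ range (n + 2), x ^ i * y ^ (n + 1 - i) =
      x ^ (n + 1) + y * ∑ i ∈ range (n + 1), x ^ i * y ^ (n - i) :=
    geom_sum₂_succ_eq x y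
  linear_combination h₂ - x * h₁

theorem stmt15 {R : Type*} [CommRing R] (n : ℕ) (x y : R) :
    ∑ k ∈ Finset.range (n / 2 + 1),
      ((n - k).choose k : R) * (x + y) ^ (n - 2 * k) * (-(x * y)) ^ k
    = ∑ i ∈ Finset.range (n + 1), x ^ i * y ^ (n - i) := by
  change lucasSum (x + y) (-(x * y)) n = _
  induction n using Nat.twoStepInduction with
  | zero => simp [lucasSum, lucasTerm]
  | one => simp [lucasSum, lucasTerm, sum_range_succ]; ring
  | more n ih₀ ih₁ =>
    rw [lucasSum_add_two, ih₀, ih₁, geom_sum₂_add_two]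
    ring
end

section
/- For all positive integers m and n, ∑_{k=0}^{⌊n/2⌋} C(n-k, k) m^k (m+1)^k = (1/(2m+1)) ((m+1)^{n+1} - (-m)^{n+1}), equivalently (2m+1) ∑_{k=0}^{⌊n/2⌋} C(n-k,k) m^k (m+1)^k = (m+1)^{n+1} - (-m)^{n+1}. -/
/-!
Writing the sum as `u n = ∑_{i + j = n} C(i, j) c ^ j` with `c = m (m + 1)`, Pascal's rule gives
`u (n + 2) = u (n + 1) + c u n`. The roots of `X ^ 2 - X - c` are `m + 1` and `-m`, so
`(2m + 1) u n` and `(m + 1) ^ (n + 1) - (-m) ^ (n + 1)` satisfy the same recurrence and agree for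
`n = 0, 1`.
-/

open Finset

section
variable {R : Type*} [CommRing R]

theorem sum_antidiagonal_choose_mul_pow_add_two (c : R) (n : ℕ) :
    ∑ p ∈ antidiagonal (n + 2), (p.1.choose p.2 : R) * c ^ p.2 =
      ∑ p ∈ antidiagonal (n + 1), (p.1.choose p.2 : R) * c ^ p.2 +
        c * ∑ p ∈ antidiagonal n, (p.1.choose p.2 : R) * c ^ p.2 := by
  have pascal (p : ℕ × ℕ) : ((p.1 + 1).choose (p.2 + 1) : R) * c ^ (p.2 + 1) =
      (p.1.choose (p.2 + 1) : R) * c ^ (p.2 + 1) + c * ((p.1.choose p.2 : R) * c ^ p.2) := by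
    rw [Nat.choose_succ_succ', Nat.cast_add]
    ring
  rw [Nat.sum_antidiagonal_succ', Nat.sum_antidiagonal_succ, Nat.sum_antidiagonal_succ' (n := n)]
  simp only [pascal, sum_add_distrib, ← mul_sum]
  simp [add_assoc]

theorem sub_mul_sum_antidiagonal_choose_mul_pow {a b : R} (hab : a + b = 1) (n : ℕ) :
    (a - b) * ∑ p ∈ antidiagonal n, (p.1.choose p.2 : R) * (-(a * b)) ^ p.2 =
      a ^ (n + 1) - b ^ (n + 1) := by
  induction n using Nat.twoStepInduction with
  | zero => simp
  | one =>
    have h₁ : ∑ p ∈ antidiagonal 1, (p.1.choose p.2 : R) * (-(a * b)) ^ p.2 = 1 := by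
      simp [Nat.sum_antidiagonal_succ]
    rw [h₁]
    linear_combination (b - a) * hab
  | more n ih₀ ih₁ =>
    rw [sum_antidiagonal_choose_mul_pow_add_two, mul_add, ih₁, mul_left_comm, ih₀]
    linear_combination (b ^ (n + 2) - a ^ (n + 2)) * hab

theorem sum_range_choose_sub_eq_sum_antidiagonal (f : ℕ → R) (n : ℕ) :
    ∑ k ∈ range (n / 2 + 1), ((n - k).choose k : R) * f k =
      ∑ p ∈ antidiagonal n, (p.1.choose p.2 : R) * f p.2 := by
  rw [← Nat.sum_antidiagonal_swap]
  simp only [Prod.fst_swap, Prod.snd_swap]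
  rw [Nat.sum_antidiagonal_eq_sum_range_succ (fun j i => (i.choose j : R) * f j)]
  refine sum_subset (range_subset_range.mpr (by omega)) fun k hk hk' => ?_
  rw [Nat.choose_eq_zero_of_lt (by simp at hk hk'; omega), Nat.cast_zero, zero_mul]

end

theorem stmt17_general (m n : ℕ) :
    (2 * (m : ℤ) + 1) * ∑ k ∈ Finset.range (n / 2 + 1),
      ((n - k).choose k : ℤ) * (m : ℤ) ^ k * ((m : ℤ) + 1) ^ k
    = ((m : ℤ) + 1) ^ (n + 1) - (-(m : ℤ)) ^ (n + 1) := by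
  have h := sub_mul_sum_antidiagonal_choose_mul_pow (a := (m : ℤ) + 1) (b := -m) (by ring) n
  rw [show (m : ℤ) + 1 - -m = 2 * m + 1 by ring, show -(((m : ℤ) + 1) * -m) = m * (m + 1) by ring,
    ← sum_range_choose_sub_eq_sum_antidiagonal] at h
  simpa only [mul_assoc, mul_pow] using h

theorem stmt17 (m n : ℕ) (hm : 0 < m) (hn : 0 < n) :
    (2 * (m : ℤ) + 1) * ∑ k ∈ Finset.range (n / 2 + 1),
      ((n - k).choose k : ℤ) * (m : ℤ) ^ k * ((m : ℤ) + 1) ^ k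
    = ((m : ℤ) + 1) ^ (n + 1) - (-(m : ℤ)) ^ (n + 1) :=
  stmt17_general m n
end

section
/- For all positive integers m and n with n ≥ 1, ∑_{k=0}^{⌊n/2⌋} (n/(n-k)) C(n-k, k) m^k (m+1)^k = (m+1)^n + (-m)^n. -/
/-!
Put `L n x = ∑ₖ n/(n-k) C(n-k,k) xᵏ`. Writing `n/(n-k) C(n-k,k) = C(n-k,k) + C(n-k-1,k-1)` and applying
Pascal's rule gives the Lucas recurrence `L (n+2) x = L (n+1) x + x L n x` for `n ≥ 1`. If `a + b = 1`,
then `a ^ n + b ^ n` satisfies the same recurrence with `x = -ab` and agrees with `L n (-ab)` for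
`n = 1, 2`. Here `a = m + 1`, `b = -m`, so `-ab = m (m + 1)`.
-/

open Finset

/-- The truncated division is exact when `2 * k ≤ n`; for `n < 2 * k` the value is `0`. -/
def lucasCoeff (n k : ℕ) : ℕ := n * (n - k).choose k / (n - k)

lemma lucasCoeff_zero_right {n : ℕ} (hn : 0 < n) : lucasCoeff n 0 = 1 := by
  simp [lucasCoeff, Nat.div_self hn]

lemma lucasCoeff_eq_zero_of_lt_two_mul {n k : ℕ} (h : n < 2 * k) : lucasCoeff n k = 0 := by
  rcases le_or_gt k n with hkn | hnk
  · simp [lucasCoeff, Nat.choose_eq_zero_of_lt (by omega : n - k < k)]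
  · simp [lucasCoeff, Nat.sub_eq_zero_of_le hnk.le]

lemma lucasCoeff_add_add_two (j k : ℕ) :
    lucasCoeff (j + k + 2) (k + 1) = (j + 1).choose (k + 1) + j.choose k := by
  have hsub : j + k + 2 - (k + 1) = j + 1 := by omega
  have hnum : (j + k + 2) * (j + 1).choose (k + 1)
      = (j + 1) * ((j + 1).choose (k + 1) + j.choose k) := by
    rw [mul_add, Nat.add_one_mul_choose_eq]
    ring
  rw [lucasCoeff, hsub, hnum, Nat.mul_div_cancel_left _ j.succ_pos]

lemma lucasCoeff_add_two_succ {n : ℕ} (hn : 0 < n) (k : ℕ) :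
    lucasCoeff (n + 2) (k + 1) = lucasCoeff (n + 1) (k + 1) + lucasCoeff n k := by
  rcases k with _ | i
  · obtain ⟨j, rfl⟩ : ∃ j, n = j + 1 := ⟨n - 1, by omega⟩
    rw [lucasCoeff_add_add_two (j + 1) 0, lucasCoeff_add_add_two j 0, lucasCoeff_zero_right j.succ_pos]
    simp
  rcases lt_or_ge n (i + 2) with hlt | hge
  · rw [lucasCoeff_eq_zero_of_lt_two_mul (by omega), lucasCoeff_eq_zero_of_lt_two_mul (by omega),
      lucasCoeff_eq_zero_of_lt_two_mul (by omega)]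
  obtain ⟨j, rfl⟩ : ∃ j, n = j + i + 2 := ⟨n - (i + 2), by omega⟩
  rw [show j + i + 2 + 2 = (j + 1) + (i + 1) + 2 by ring, show j + i + 2 + 1 = j + (i + 1) + 2 by ring,
    lucasCoeff_add_add_two, lucasCoeff_add_add_two, lucasCoeff_add_add_two,
    Nat.choose_succ_succ' (j + 1) (i + 1), Nat.choose_succ_succ' j i]
  ring

section CommRing

variable {R : Type*} [CommRing R]

lemma sum_range_lucasCoeff_mul_pow_of_le {n N M : ℕ} (hN : n < 2 * N) (hNM : N ≤ M) (x : R) :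
    ∑ k ∈ range N, (lucasCoeff n k : R) * x ^ k = ∑ k ∈ range M, (lucasCoeff n k : R) * x ^ k := by
  refine sum_subset (range_subset_range.2 hNM) fun k _ hk => ?_
  rw [lucasCoeff_eq_zero_of_lt_two_mul (by simp at hk; omega)]
  simp

lemma sum_range_lucasCoeff_mul_pow_add_two {n : ℕ} (hn : 0 < n) (N : ℕ) (x : R) :
    ∑ k ∈ range (N + 1), (lucasCoeff (n + 2) k : R) * x ^ k
      = ∑ k ∈ range (N + 1), (lucasCoeff (n + 1) k : R) * x ^ k
        + x * ∑ k ∈ range N, (lucasCoeff n k : R) * x ^ k := by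
  simp only [sum_range_succ', lucasCoeff_add_two_succ hn, lucasCoeff_zero_right (Nat.succ_pos _),
    mul_sum, Nat.cast_add, add_mul, sum_add_distrib]
  rw [add_right_comm]
  exact congrArg _ (sum_congr rfl fun k _ => by ring)

theorem pow_add_pow_eq_sum_range_lucasCoeff {a b : R} (hab : a + b = 1) {n N : ℕ} (hn : 0 < n)
    (hN : n < 2 * N) :
    ∑ k ∈ range N, (lucasCoeff n k : R) * (-(a * b)) ^ k = a ^ n + b ^ n := by
  induction n using Nat.twoStepInduction generalizing N with
  | zero => omega
  | one =>
    rw [← sum_range_lucasCoeff_mul_pow_of_le (by omega : 1 < 2 * 1) (by omega : 1 ≤ N)]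
    simp [lucasCoeff, hab]
  | more n ih₀ ih₁ =>
    obtain ⟨M, rfl⟩ : ∃ M, N = M + 1 := ⟨N - 1, by omega⟩
    rcases n.eq_zero_or_pos with rfl | hn₀
    · rw [← sum_range_lucasCoeff_mul_pow_of_le (by omega : 2 < 2 * 2) (by omega : 2 ≤ M + 1)]
      rw [sum_range_succ, sum_range_one, lucasCoeff_zero_right two_pos, show lucasCoeff 2 1 = 2 from rfl]
      linear_combination -(a + b + 1) * hab
    · rw [sum_range_lucasCoeff_mul_pow_add_two hn₀, ih₁ (by omega) (by omega), ih₀ hn₀ (by omega)]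
      linear_combination -(a ^ (n + 1) + b ^ (n + 1)) * hab

end CommRing

theorem stmt18_general (m n : ℕ) (hn : 0 < n) :
    ∑ k ∈ Finset.range (n / 2 + 1),
      ((n * (n - k).choose k / (n - k) : ℕ) : ℤ) * (m : ℤ) ^ k * ((m : ℤ) + 1) ^ k
    = ((m : ℤ) + 1) ^ n + (-(m : ℤ)) ^ n := by
  rw [← pow_add_pow_eq_sum_range_lucasCoeff (add_neg_cancel_comm _ _) hn (by omega : n < 2 * (n / 2 + 1))]
  refine sum_congr rfl fun k _ => ?_
  rw [lucasCoeff, mul_neg, neg_neg, mul_pow]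
  ring

theorem stmt18 (m n : ℕ) (hm : 0 < m) (hn : 0 < n) :
    ∑ k ∈ Finset.range (n / 2 + 1),
      ((n * (n - k).choose k / (n - k) : ℕ) : ℤ) * (m : ℤ) ^ k * ((m : ℤ) + 1) ^ k
    = ((m : ℤ) + 1) ^ n + (-(m : ℤ)) ^ n :=
  stmt18_general m n hn
end

section
/- For a positive integer n and 0 ≤ k ≤ ⌊n/2⌋, the number of k-element subsets of the cyclic group ℤ_n containing no two cyclically consecutive elements equals (n/(n-k))·C(n-k, k). -/
/-!
Count the pairs `(A, x)` with `A` a `k`-subset of `ℤ_n` without two consecutive elements and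
`x ∉ A`. Each `A` lies in `n - k` pairs. Rotating by `y - x` matches the sets avoiding `x` with
those avoiding `y`, so each `x` lies in as many pairs as `-1`; a set avoiding `-1` is a subset of
the path `0, …, n - 2`, and these are counted by `C(n - k, k)` through the recursion
`f(m + 2, k + 1) = f(m + 1, k + 1) + f(m, k)` (split on whether `m + 1 ∈ A`).
Hence `(n - k)` times the number of such `A` is `n · C(n - k, k)`.
-/

open Finset
open scoped Pointwise

def NoConsecutive {α : Type*} [Add α] [One α] (A : Finset α) : Prop :=
  ∀ a ∈ A, a + 1 ∉ A

instance {α : Type*} [Add α] [One α] [DecidableEq α] : DecidablePred (NoConsecutive (α := α)) :=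
  fun A => inferInstanceAs (Decidable (∀ a ∈ A, a + 1 ∉ A))

theorem NoConsecutive.mono {α : Type*} [Add α] [One α] {A B : Finset α}
    (hA : NoConsecutive A) (hBA : B ⊆ A) : NoConsecutive B :=
  fun _ ha hb => hA _ (hBA ha) (hBA hb)

theorem NoConsecutive.vadd_finset_iff {G : Type*} [AddGroup G] [One G] [DecidableEq G]
    (c : G) (A : Finset G) : NoConsecutive (c +ᵥ A) ↔ NoConsecutive A := by
  simp only [NoConsecutive, mem_vadd_finset, forall_exists_index, and_imp,
    forall_apply_eq_imp_iff₂]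
  refine forall₂_congr fun a _ => ?_
  rw [show (c +ᵥ a) + 1 = c +ᵥ (a + 1) from add_assoc c a 1, ← mem_vadd_finset,
    vadd_mem_vadd_finset_iff]

def nonconsecutiveSubsets (m k : ℕ) : Finset (Finset ℕ) :=
  {A ∈ (range m).powersetCard k | NoConsecutive A}

theorem mem_nonconsecutiveSubsets {m k : ℕ} {A : Finset ℕ} :
    A ∈ nonconsecutiveSubsets m k ↔ A ⊆ range m ∧ #A = k ∧ NoConsecutive A := by
  simp [nonconsecutiveSubsets, mem_powersetCard, and_assoc]

theorem nonconsecutiveSubsets_zero (m : ℕ) : nonconsecutiveSubsets m 0 = {∅} := by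
  simp [nonconsecutiveSubsets, NoConsecutive]

theorem nonconsecutiveSubsets_eq_empty {m k : ℕ} (h : m < k) : nonconsecutiveSubsets m k = ∅ := by
  rw [nonconsecutiveSubsets, powersetCard_eq_empty.2 (by simpa using h), filter_empty]

theorem filter_notMem_nonconsecutiveSubsets (m k : ℕ) :
    {A ∈ nonconsecutiveSubsets (m + 1) k | m ∉ A} = nonconsecutiveSubsets m k := by
  ext A
  simp only [mem_filter, mem_nonconsecutiveSubsets, range_add_one]
  constructor
  · rintro ⟨⟨hA, hk, hc⟩, hm⟩
    exact ⟨(subset_insert_iff_of_notMem hm).1 hA, hk, hc⟩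
  · rintro ⟨hA, hk, hc⟩
    exact ⟨⟨hA.trans (subset_insert _ _), hk, hc⟩, fun h => by simpa using hA h⟩

theorem card_filter_mem_nonconsecutiveSubsets (m k : ℕ) :
    #{A ∈ nonconsecutiveSubsets (m + 2) (k + 1) | m + 1 ∈ A} = #(nonconsecutiveSubsets m k) := by
  refine card_nbij' (·.erase (m + 1)) (insert (m + 1)) (fun A hA => ?_) (fun B hB => ?_)
    (fun A hA => insert_erase (mem_filter.1 hA).2) (fun B hB => ?_)
  · obtain ⟨hA, hm⟩ := mem_filter.1 hA
    obtain ⟨hA, hk, hc⟩ := mem_nonconsecutiveSubsets.1 hA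
    refine mem_nonconsecutiveSubsets.2
      ⟨fun a ha => ?_, by rw [card_erase_of_mem hm, hk]; rfl, hc.mono (erase_subset _ _)⟩
    obtain ⟨hne, haA⟩ := mem_erase.1 ha
    have : a ≠ m := fun h => hc a haA (h ▸ hm)
    have := mem_range.1 (hA haA)
    exact mem_range.2 (by omega)
  · obtain ⟨hB, hk, hc⟩ := mem_nonconsecutiveSubsets.1 hB
    have hlt : ∀ b ∈ B, b < m := fun b hb => mem_range.1 (hB hb)
    have hm : m + 1 ∉ B := fun h => by simpa using hlt _ h
    refine mem_filter.2 ⟨mem_nonconsecutiveSubsets.2 ⟨fun a ha => ?_,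
      by rw [card_insert_of_notMem hm, hk], fun a ha ha1 => ?_⟩, mem_insert_self _ _⟩
    · rcases mem_insert.1 ha with rfl | ha
      · exact mem_range.2 (by omega)
      · exact mem_range.2 (by have := hlt a ha; omega)
    · rcases mem_insert.1 ha with rfl | ha <;> rcases mem_insert.1 ha1 with h | h
      · omega
      · have := hlt _ h; omega
      · have := hlt a ha; omega
      · exact hc a ha h
  · exact erase_insert fun h => by simpa using (mem_nonconsecutiveSubsets.1 hB).1 h

theorem card_nonconsecutiveSubsets_add_two (m k : ℕ) :
    #(nonconsecutiveSubsets (m + 2) (k + 1))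
      = #(nonconsecutiveSubsets (m + 1) (k + 1)) + #(nonconsecutiveSubsets m k) := by
  rw [← card_filter_add_card_filter_not (fun A => m + 1 ∈ A),
    card_filter_mem_nonconsecutiveSubsets, filter_notMem_nonconsecutiveSubsets, add_comm]

theorem card_nonconsecutiveSubsets : ∀ m k, #(nonconsecutiveSubsets m k) = (m + 1 - k).choose k
  | m, 0 => by simp [nonconsecutiveSubsets_zero]
  | 0, k + 1 => by simp [nonconsecutiveSubsets_eq_empty]
  | 1, 1 => by decide
  | 1, k + 2 => by simp [nonconsecutiveSubsets_eq_empty]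
  | m + 2, k + 1 => by
    rw [card_nonconsecutiveSubsets_add_two, card_nonconsecutiveSubsets (m + 1),
      card_nonconsecutiveSubsets m]
    rcases le_or_gt k (m + 1) with hk | hk
    · rw [show m + 2 + 1 - (k + 1) = m + 1 - k + 1 by omega,
        show m + 1 + 1 - (k + 1) = m + 1 - k by omega, Nat.choose_succ_succ', add_comm]
    · rw [show m + 2 + 1 - (k + 1) = 0 by omega, show m + 1 + 1 - (k + 1) = 0 by omega,
        show m + 1 - k = 0 by omega]
      simp [Nat.choose_eq_zero_of_lt (show 0 < k by omega)]

theorem ZMod.val_lt_of_ne_neg_one {m : ℕ} {a : ZMod (m + 1)} (h : a ≠ -1) : a.val < m := by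
  refine lt_of_le_of_ne (Nat.lt_succ_iff.1 a.val_lt) fun ha => h ?_
  exact ZMod.val_injective _ (ha.trans (ZMod.val_neg_one m).symm)

theorem ZMod.val_add_one_of_ne_neg_one {m : ℕ} {a : ZMod (m + 1)} (h : a ≠ -1) :
    (a + 1).val = a.val + 1 := by
  have := ZMod.val_lt_of_ne_neg_one h
  have h1 : (1 : ZMod (m + 1)).val = 1 := ZMod.val_one'' (by omega)
  rw [ZMod.val_add_of_lt (by omega), h1]

def cyclicNonconsecutive (n k : ℕ) [NeZero n] : Finset (Finset (ZMod n)) :=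
  {A | #A = k ∧ NoConsecutive A}

theorem mem_cyclicNonconsecutive {n k : ℕ} [NeZero n] {A : Finset (ZMod n)} :
    A ∈ cyclicNonconsecutive n k ↔ #A = k ∧ NoConsecutive A := by
  simp [cyclicNonconsecutive]

theorem card_filter_notMem_cyclicNonconsecutive (n k : ℕ) [NeZero n] (x y : ZMod n) :
    #{A ∈ cyclicNonconsecutive n k | x ∉ A} = #{A ∈ cyclicNonconsecutive n k | y ∉ A} := by
  refine card_equiv (AddAction.toPerm (y - x)) fun A => ?_
  have hy : y ∈ (y - x) +ᵥ A ↔ x ∈ A := by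
    simpa only [vadd_eq_add, sub_add_cancel] using vadd_mem_vadd_finset_iff (s := A) (b := x) (y - x)
  simp only [mem_filter, mem_cyclicNonconsecutive, AddAction.toPerm_apply, card_vadd_finset,
    NoConsecutive.vadd_finset_iff, hy]

theorem card_cyclicNonconsecutive_mul (n k : ℕ) [NeZero n] :
    #(cyclicNonconsecutive n k) * (n - k) = n * #{A ∈ cyclicNonconsecutive n k | -1 ∉ A} := by
  have h := card_mul_eq_card_mul (fun A x => x ∉ A) (s := cyclicNonconsecutive n k)
    (t := univ) (m := n - k) (n := #{A ∈ cyclicNonconsecutive n k | -1 ∉ A}) ?_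
    fun x _ => card_filter_notMem_cyclicNonconsecutive n k x (-1)
  · rwa [card_univ, ZMod.card] at h
  intro A hA
  rw [bipartiteAbove, filter_not, filter_mem_eq_inter, univ_inter, ← compl_eq_univ_sdiff,
    card_compl, ZMod.card, (mem_cyclicNonconsecutive.1 hA).1]

theorem ZMod.image_val_image_natCast {n : ℕ} {B : Finset ℕ} (hB : B ⊆ range n) :
    (B.image (Nat.cast : ℕ → ZMod n)).image ZMod.val = B := by
  rw [image_image]
  exact (image_congr fun b hb => ZMod.val_cast_of_lt (mem_range.1 (hB hb))).trans image_id

theorem ZMod.card_image_natCast {n : ℕ} {B : Finset ℕ} (hB : B ⊆ range n) :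
    #(B.image (Nat.cast : ℕ → ZMod n)) = #B := by
  refine le_antisymm card_image_le ?_
  conv_lhs => rw [← ZMod.image_val_image_natCast hB]
  exact card_image_le

theorem image_val_mem_nonconsecutiveSubsets {m k : ℕ} {A : Finset (ZMod (m + 1))}
    (hA : A ∈ cyclicNonconsecutive (m + 1) k) (h : -1 ∉ A) :
    A.image ZMod.val ∈ nonconsecutiveSubsets m k := by
  obtain ⟨hk, hc⟩ := mem_cyclicNonconsecutive.1 hA
  have hne : ∀ a ∈ A, a ≠ -1 := fun a ha ha1 => h (ha1 ▸ ha)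
  refine mem_nonconsecutiveSubsets.2 ⟨fun b hb => ?_, ?_, fun b hb hb1 => ?_⟩
  · obtain ⟨a, ha, rfl⟩ := mem_image.1 hb
    exact mem_range.2 (ZMod.val_lt_of_ne_neg_one (hne a ha))
  · rw [card_image_of_injective _ (ZMod.val_injective _), hk]
  · obtain ⟨a, ha, rfl⟩ := mem_image.1 hb
    obtain ⟨a', ha', ha'_eq⟩ := mem_image.1 hb1
    rw [← ZMod.val_add_one_of_ne_neg_one (hne a ha)] at ha'_eq
    exact hc a ha (ZMod.val_injective _ ha'_eq ▸ ha')

theorem image_natCast_mem_cyclicNonconsecutive {m k : ℕ} {B : Finset ℕ}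
    (hB : B ∈ nonconsecutiveSubsets m k) :
    B.image (↑) ∈ cyclicNonconsecutive (m + 1) k ∧ (-1 : ZMod (m + 1)) ∉ B.image (↑) := by
  obtain ⟨hB, hk, hc⟩ := mem_nonconsecutiveSubsets.1 hB
  have hlt : ∀ b ∈ B, b < m := fun b hb => mem_range.1 (hB hb)
  have hval : ∀ b ∈ B, ((b : ZMod (m + 1))).val = b :=
    fun b hb => ZMod.val_cast_of_lt (Nat.lt_succ_of_lt (hlt b hb))
  refine ⟨mem_cyclicNonconsecutive.2 ⟨?_, fun a ha ha1 => ?_⟩, fun h => ?_⟩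
  · rw [ZMod.card_image_natCast (hB.trans (range_subset_range.2 m.le_succ)), hk]
  · obtain ⟨b, hb, rfl⟩ := mem_image.1 ha
    obtain ⟨b', hb', hb'_eq⟩ := mem_image.1 ha1
    have : b' = b + 1 := by
      rw [← hval b' hb', hb'_eq, ← Nat.cast_add_one,
        ZMod.val_cast_of_lt (Nat.succ_lt_succ (hlt b hb))]
    exact hc b hb (this ▸ hb')
  · obtain ⟨b, hb, hb_eq⟩ := mem_image.1 h
    have := hval b hb
    rw [hb_eq, ZMod.val_neg_one] at this
    exact (hlt b hb).ne this.symm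

theorem card_filter_neg_one_notMem_cyclicNonconsecutive (m k : ℕ) :
    #{A ∈ cyclicNonconsecutive (m + 1) k | -1 ∉ A} = #(nonconsecutiveSubsets m k) := by
  refine card_nbij' (·.image ZMod.val) (·.image (↑)) (fun A hA => ?_)
    (fun B hB => ?_) (fun A _ => ?_) (fun B hB => ?_)
  · obtain ⟨hA, h⟩ := mem_filter.1 hA
    exact image_val_mem_nonconsecutiveSubsets hA h
  · exact mem_filter.2 (image_natCast_mem_cyclicNonconsecutive hB)
  · simp [image_image, Function.comp_def]
  · exact ZMod.image_val_image_natCast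
      ((mem_nonconsecutiveSubsets.1 hB).1.trans (range_subset_range.2 m.le_succ))

theorem stmt19 (n k : ℕ) [NeZero n] (hk : k ≤ n / 2) :
    (Finset.univ.filter
        (fun A : Finset (ZMod n) => A.card = k ∧ ∀ a ∈ A, a + 1 ∉ A)).card
    = n * (n - k).choose k / (n - k) := by
  -- not `rfl`: on `ZMod n` the statement decides `∀ a ∈ A` through `Fintype`, not `Finset`
  have hS : ({A | #A = k ∧ ∀ a ∈ A, a + 1 ∉ A} : Finset (Finset (ZMod n)))
      = cyclicNonconsecutive n k := by
    ext A
    simp [mem_cyclicNonconsecutive, NoConsecutive]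
  rw [hS]
  obtain ⟨m, rfl⟩ := Nat.exists_eq_add_one_of_ne_zero (NeZero.ne n)
  have h := card_cyclicNonconsecutive_mul (m + 1) k
  rw [card_filter_neg_one_notMem_cyclicNonconsecutive, card_nonconsecutiveSubsets] at h
  exact (Nat.div_eq_of_eq_mul_left (by omega) h.symm).symm
end
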